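/- arXiv:1606.06482 — 8 statements merged into one kernel-verified Lean document; each statement's English description precedes it below -/
import Mathlib

section
/- Let S be an ultimately periodic sequence over F_q with preperiod t and linear complexity L whose generating function is G(x) = f(x)/g(x) with deg(f) < L, deg(g) = L − t, gcd(f,g) = 1, gcd(g(x), x) = 1, and G not identically zero. Let h(x,y) ∈ F_q[x,y] be a nonzero polynomial of degree d in y, and put H(x) = g(x)^d · h(x, G(x)). If H(x) is the zero polynomial, then the total degree of h satisfies deg(h) ≥ L − t + 1. -/
/-!
View `h` as a polynomial `Q(y) = ∑ⱼ hⱼ(x) yʲ` of degree `d` over `F[x]`. Since `G g = f`,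
`H = g^d Q(G) = ∑ⱼ hⱼ fʲ g^(d-j)`, so `H = 0` says that `f` is a root of `Q` with roots scaled
by `g`. All terms but `h_d f^d` are divisible by `g`, which is coprime to `f`, so `g ∣ h_d`
(the rational root theorem for `f / g`). Hence `deg h ≥ deg h_d + d ≥ (L - t) + d`, and `d ≥ 1`
because a nonzero polynomial constant in `y` does not vanish.
-/

/-- The `N`-th linear complexity of a sequence `s` over a field: the length of a
shortest linear recurrence satisfied by the first `N` terms. -/
noncomputable def linComplexityN {F : Type*} [Field F] (s : ℕ → F) (N : ℕ) : ℕ :=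
  sInf {L | ∃ c : Fin L → F, ∀ i, i + L < N →
    s (i + L) + ∑ ℓ : Fin L, c ℓ * s (i + ℓ.1) = 0}

open Classical in
/-- The `N`-th expansion complexity of a sequence `s` over a field: `0` if the first
`N` terms vanish, otherwise the least total degree of a nonzero bivariate polynomial
`h(x,y)` with `h(x, G(x)) ≡ 0 mod x^N`, where `G` is the generating function of `s`. -/
noncomputable def expComplexityN {F : Type*} [Field F] (s : ℕ → F) (N : ℕ) : ℕ :=
  if ∀ i < N, s i = 0 then 0 else
  sInf {d | ∃ h : MvPolynomial (Fin 2) F, h ≠ 0 ∧ h.totalDegree = d ∧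
    (PowerSeries.X : PowerSeries F) ^ N ∣
      MvPolynomial.aeval ![(PowerSeries.X : PowerSeries F), PowerSeries.mk s] h}

open Polynomial

namespace Polynomial

variable {A : Type*} [CommRing A]

theorem dvd_leadingCoeff_of_isRoot_scaleRoots {p : A[X]} {r s : A} (hrs : IsCoprime r s)
    (hr : (p.scaleRoots s).IsRoot r) : s ∣ p.leadingCoeff := by
  have hterm : s ∣ p.leadingCoeff * r ^ p.natDegree := by
    rw [← coeff_scaleRoots_natDegree, ← natDegree_scaleRoots p s]
    refine dvd_term_of_isRoot_of_dvd_terms _ hr fun j hj => ?_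
    rcases lt_or_gt_of_ne hj with hlt | hgt
    · rw [natDegree_scaleRoots] at hlt
      rw [coeff_scaleRoots]
      exact ((dvd_pow_self s (Nat.sub_ne_zero_of_lt hlt)).mul_left _).mul_right _
    · rw [coeff_eq_zero_of_natDegree_lt hgt, zero_mul]
      exact dvd_zero s
  exact hrs.symm.pow_right.dvd_of_dvd_mul_right hterm

theorem isRoot_scaleRoots_of_eval₂_eq_zero {B : Type*} [CommRing B] {φ : A →+* B}
    (hφ : Function.Injective φ) {p : A[X]} {r s : A} {x : B} (hx : x * φ s = φ r)
    (h : φ s ^ p.natDegree * p.eval₂ φ x = 0) : (p.scaleRoots s).IsRoot r := by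
  apply hφ
  rw [map_zero, ← h, ← scaleRoots_eval₂_mul, mul_comm, hx, eval₂_at_apply]

end Polynomial

namespace Polynomial.Bivariate

variable {R : Type*} [CommSemiring R]

theorem equivMvPolynomial_monomial_monomial (n k : ℕ) (a : R) :
    equivMvPolynomial R (monomial n (monomial k a)) =
      MvPolynomial.monomial (Finsupp.single 0 k + Finsupp.single 1 n) a := by
  simp [← C_mul_X_pow_eq_monomial, MvPolynomial.monomial_eq, mul_assoc]

theorem coeff_equivMvPolynomial (p : R[X][Y]) (m : Fin 2 →₀ ℕ) :
    (equivMvPolynomial R p).coeff m = (p.coeff (m 1)).coeff (m 0) := by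
  induction p using Polynomial.induction_on' with
  | add p q hp hq => simp [hp, hq]
  | monomial n a =>
    induction a using Polynomial.induction_on' with
    | add a b ha hb => simp_all
    | monomial k c =>
      have hm : Finsupp.single 0 k + Finsupp.single 1 n = m ↔ k = m 0 ∧ n = m 1 :=
        ⟨by rintro rfl; simp, by rintro ⟨rfl, rfl⟩; ext x; fin_cases x <;> simp⟩
      simp only [equivMvPolynomial_monomial_monomial, MvPolynomial.coeff_monomial, hm,
        coeff_monomial]
      split_ifs <;> simp_all [coeff_monomial]

theorem single_add_single_mem_support_equivMvPolynomial {p : R[X][Y]} {i j : ℕ}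
    (h : (p.coeff j).coeff i ≠ 0) :
    Finsupp.single 0 i + Finsupp.single 1 j ∈ (equivMvPolynomial R p).support := by
  simpa [coeff_equivMvPolynomial] using h

theorem degreeOf_one_equivMvPolynomial (p : R[X][Y]) :
    (equivMvPolynomial R p).degreeOf 1 = p.natDegree := by
  refine le_antisymm (MvPolynomial.degreeOf_le_iff.mpr fun m hm => ?_) ?_
  · rw [MvPolynomial.mem_support_iff, coeff_equivMvPolynomial] at hm
    exact le_natDegree_of_ne_zero fun h0 => hm (by rw [h0, coeff_zero])
  · rcases eq_or_ne p 0 with rfl | hp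
    · simp
    have hmem := single_add_single_mem_support_equivMvPolynomial
      (leadingCoeff_ne_zero.mpr (leadingCoeff_ne_zero.mpr hp))
    simpa using MvPolynomial.monomial_le_degreeOf 1 hmem

theorem natDegree_coeff_add_le_totalDegree {p : R[X][Y]} {j : ℕ} (hj : p.coeff j ≠ 0) :
    (p.coeff j).natDegree + j ≤ (equivMvPolynomial R p).totalDegree := by
  have hmem := single_add_single_mem_support_equivMvPolynomial
    (leadingCoeff_ne_zero.mpr hj)
  simpa [Finsupp.sum_add_index'] using MvPolynomial.le_totalDegree hmem

theorem aeval_powerSeriesX_equivMvPolynomial (G : PowerSeries R) (p : R[X][Y]) :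
    MvPolynomial.aeval ![PowerSeries.X, G] (equivMvPolynomial R p) =
      p.eval₂ coeToPowerSeries.ringHom G := by
  have : (MvPolynomial.aeval ![PowerSeries.X, G]).toRingHom.comp
      (equivMvPolynomial R).toRingHom = eval₂RingHom coeToPowerSeries.ringHom G := by
    ext <;> simp
  exact congr($this p)

end Polynomial.Bivariate

theorem totalDegree_ge_of_H_eq_zero_general {F : Type*} [Field F]
    (s : ℕ → F) (t L : ℕ)
    (f g : Polynomial F)
    (hdg : g.natDegree = L - t)
    (hcop : IsCoprime f g)
    (hfg : PowerSeries.mk s * (g : PowerSeries F) = (f : PowerSeries F))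
    (h : MvPolynomial (Fin 2) F) (hh : h ≠ 0)
    (hH : (g : PowerSeries F) ^ (MvPolynomial.degreeOf 1 h) *
        MvPolynomial.aeval ![(PowerSeries.X : PowerSeries F), PowerSeries.mk s] h = 0) :
    L - t + 1 ≤ h.totalDegree := by
  obtain ⟨Q, rfl⟩ := (Bivariate.equivMvPolynomial F).surjective h
  have hQ : Q ≠ 0 := by simpa using hh
  rw [Bivariate.degreeOf_one_equivMvPolynomial,
    Bivariate.aeval_powerSeriesX_equivMvPolynomial] at hH
  have hroot : (Q.scaleRoots g).IsRoot f :=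
    isRoot_scaleRoots_of_eval₂_eq_zero (φ := coeToPowerSeries.ringHom) (coe_injective F)
      hfg hH
  have hd : 0 < Q.natDegree := natDegree_scaleRoots Q g ▸
    natDegree_pos_of_eval₂_root (scaleRoots_ne_zero hQ g) (RingHom.id _) hroot fun _ => id
  have hlc : Q.leadingCoeff ≠ 0 := leadingCoeff_ne_zero.mpr hQ
  have hdeg : L - t ≤ Q.leadingCoeff.natDegree :=
    hdg ▸ natDegree_le_of_dvd (dvd_leadingCoeff_of_isRoot_scaleRoots hcop hroot) hlc
  calc L - t + 1 ≤ Q.leadingCoeff.natDegree + Q.natDegree := by omega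
    _ ≤ (Bivariate.equivMvPolynomial F Q).totalDegree :=
      Bivariate.natDegree_coeff_add_le_totalDegree hlc

theorem totalDegree_ge_of_H_eq_zero {F : Type*} [Field F] [Fintype F]
    (s : ℕ → F) (t T L : ℕ) (hT : 0 < T)
    (hper : ∀ i, s (i + t + T) = s (i + t)) (htL : t ≤ L)
    (hL : (⨆ N, (linComplexityN s N : ℕ∞)) = (L : ℕ∞))
    (f g : Polynomial F)
    (hdf : f.natDegree < L) (hdg : g.natDegree = L - t)
    (hcop : IsCoprime f g) (hgx : g.coeff 0 ≠ 0)
    (hfg : PowerSeries.mk s * (g : PowerSeries F) = (f : PowerSeries F))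
    (hGne : PowerSeries.mk s ≠ 0)
    (h : MvPolynomial (Fin 2) F) (hh : h ≠ 0)
    (hH : (g : PowerSeries F) ^ (MvPolynomial.degreeOf 1 h) *
        MvPolynomial.aeval ![(PowerSeries.X : PowerSeries F), PowerSeries.mk s] h = 0) :
    L - t + 1 ≤ h.totalDegree :=
  totalDegree_ge_of_H_eq_zero_general s t L f g hdg hcop hfg h hh hH
end

section
/- Let S be a purely periodic sequence over F_q (preperiod t = 0) with linear complexity L and nonzero generating function. Then for every N > (L−t)(L−t+1) = L(L+1), one has E_N(S) = L + 1. -/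
section ExpComplexityAux

open Finset

variable {F : Type*} [Field F]

/-- global linear recurrence of length `M` with coefficient function `c`. -/
private def GRec (s : ℕ → F) (M : ℕ) (c : ℕ → F) : Prop :=
  ∀ i, s (i + M) + ∑ ℓ ∈ Finset.range M, c ℓ * s (i + ℓ) = 0

private lemma coeff_coe_mul_mk (q : Polynomial F) (s : ℕ → F) (n : ℕ) :
    PowerSeries.coeff n ((q : PowerSeries F) * PowerSeries.mk s)
      = ∑ k ∈ Finset.range (n + 1), q.coeff k * s (n - k) := by
  rw [PowerSeries.coeff_mul, Finset.Nat.sum_antidiagonal_eq_sum_range_succ_mk]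
  simp [Polynomial.coeff_coe]

private lemma coeff_key (q : Polynomial F) (s : ℕ → F) (M n : ℕ)
    (hdeg : q.natDegree ≤ M) (hn : M ≤ n) :
    PowerSeries.coeff n ((q : PowerSeries F) * PowerSeries.mk s)
      = q.coeff 0 * s n + ∑ ℓ ∈ Finset.range M, q.coeff (M - ℓ) * s (n - M + ℓ) := by
  rw [coeff_coe_mul_mk]
  rw [← Finset.sum_subset (Finset.range_subset_range.2 (by omega : M + 1 ≤ n + 1))
      (fun k hk hk' => by
        have : q.natDegree < k := by
          simp only [Finset.mem_range] at hk hk'; omega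
        rw [Polynomial.coeff_eq_zero_of_natDegree_lt this, zero_mul])]
  rw [Finset.sum_range_succ']
  have h1 : ∑ ℓ ∈ Finset.range M, q.coeff (M - ℓ) * s (n - M + ℓ)
      = ∑ k ∈ Finset.range M, q.coeff (k + 1) * s (n - (k + 1)) := by
    rw [← Finset.sum_range_reflect]
    refine Finset.sum_congr rfl fun j hj => ?_
    simp only [Finset.mem_range] at hj
    have h2 : M - (M - 1 - j) = j + 1 := by omega
    have h3 : n - M + (M - 1 - j) = n - (j + 1) := by omega
    rw [h2, h3]
  rw [h1, Nat.sub_zero, add_comm]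

private lemma grec_of_poly (q : Polynomial F) (s : ℕ → F) (M : ℕ)
    (h0 : q.coeff 0 ≠ 0) (hdeg : q.natDegree ≤ M)
    (hz : ∀ n, M ≤ n → PowerSeries.coeff n ((q : PowerSeries F) * PowerSeries.mk s) = 0) :
    GRec s M (fun ℓ => (q.coeff 0)⁻¹ * q.coeff (M - ℓ)) := by
  intro i
  have hz' := hz (i + M) (by omega)
  rw [coeff_key q s M (i + M) hdeg (by omega)] at hz'
  have h1 : ∀ ℓ ∈ Finset.range M, q.coeff (M - ℓ) * s (i + M - M + ℓ)
      = q.coeff (M - ℓ) * s (i + ℓ) := by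
    intro ℓ _; congr 2; omega
  rw [Finset.sum_congr rfl h1] at hz'
  have h2 : ∑ ℓ ∈ Finset.range M, ((q.coeff 0)⁻¹ * q.coeff (M - ℓ)) * s (i + ℓ)
      = (q.coeff 0)⁻¹ * ∑ ℓ ∈ Finset.range M, q.coeff (M - ℓ) * s (i + ℓ) := by
    rw [Finset.mul_sum]; exact Finset.sum_congr rfl fun ℓ _ => by ring
  rw [h2]
  have h3 : ∑ ℓ ∈ Finset.range M, q.coeff (M - ℓ) * s (i + ℓ) = -(q.coeff 0 * s (i + M)) := by
    linear_combination hz'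
  rw [h3, mul_neg, ← mul_assoc, inv_mul_cancel₀ h0, one_mul, add_neg_cancel]

/-- the characteristic polynomial attached to a recurrence coefficient function -/
private noncomputable def Qof (M : ℕ) (c : ℕ → F) : Polynomial F :=
  ∑ k ∈ Finset.range (M + 1), Polynomial.monomial k (if k = 0 then 1 else c (M - k))

private lemma Qof_coeff (M : ℕ) (c : ℕ → F) (k : ℕ) :
    (Qof M c).coeff k = if k ≤ M then (if k = 0 then 1 else c (M - k)) else 0 := by
  rw [Qof, Polynomial.finset_sum_coeff]
  simp only [Polynomial.coeff_monomial]
  rw [Finset.sum_ite_eq' (Finset.range (M + 1)) k]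
  simp [Nat.lt_succ_iff]

private lemma Qof_coeff_zero (M : ℕ) (c : ℕ → F) : (Qof M c).coeff 0 = 1 := by
  simp [Qof_coeff]

private lemma Qof_natDegree_le (M : ℕ) (c : ℕ → F) : (Qof M c).natDegree ≤ M := by
  refine Polynomial.natDegree_sum_le_of_forall_le _ _ fun k hk => ?_
  exact (Polynomial.natDegree_monomial_le _).trans (by simp only [Finset.mem_range] at hk; omega)

private lemma Qof_mul_coeff (s : ℕ → F) (M : ℕ) (c : ℕ → F) (h : GRec s M c) :
    ∀ n, M ≤ n → PowerSeries.coeff n ((Qof M c : PowerSeries F) * PowerSeries.mk s) = 0 := by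
  intro n hn
  rw [coeff_key _ s M n (Qof_natDegree_le M c) hn, Qof_coeff_zero, one_mul]
  have h1 : ∀ ℓ ∈ Finset.range M, (Qof M c).coeff (M - ℓ) * s (n - M + ℓ)
      = c ℓ * s ((n - M) + ℓ) := by
    intro ℓ hℓ; simp only [Finset.mem_range] at hℓ
    rw [Qof_coeff]
    have e1 : M - ℓ ≤ M := by omega
    have e2 : ¬ (M - ℓ = 0) := by omega
    have e3 : M - (M - ℓ) = ℓ := by omega
    rw [if_pos e1, if_neg e2, e3]
  rw [Finset.sum_congr rfl h1]
  have h2 := h (n - M)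
  rwa [Nat.sub_add_cancel hn] at h2


private lemma linComplexityN_mem (s : ℕ → F) (N : ℕ) :
    ∃ c : Fin (linComplexityN s N) → F, ∀ i, i + linComplexityN s N < N →
      s (i + linComplexityN s N) + ∑ ℓ : Fin (linComplexityN s N), c ℓ * s (i + ℓ.1) = 0 := by
  have hne : {L | ∃ c : Fin L → F, ∀ i, i + L < N →
      s (i + L) + ∑ ℓ : Fin L, c ℓ * s (i + ℓ.1) = 0}.Nonempty :=
    ⟨N, fun _ => 0, fun i hi => absurd hi (by omega)⟩
  exact Nat.sInf_mem hne

private lemma le_of_grec {s : ℕ → F} {L : ℕ}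
    (hL : (⨆ N, (linComplexityN s N : ℕ∞)) = (L : ℕ∞))
    {M : ℕ} {c : ℕ → F} (h : GRec s M c) : L ≤ M := by
  have h1 : ∀ N, linComplexityN s N ≤ M := by
    intro N
    refine Nat.sInf_le ⟨fun ℓ : Fin M => c ℓ, fun i _ => ?_⟩
    rw [Fin.sum_univ_eq_sum_range (fun ℓ => c ℓ * s (i + ℓ)) M]
    exact h i
  have h2 : (⨆ N, (linComplexityN s N : ℕ∞)) ≤ (M : ℕ∞) :=
    iSup_le fun N => by exact_mod_cast h1 N
  rw [hL] at h2
  exact_mod_cast h2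

private lemma linComplexityN_le {s : ℕ → F} {L : ℕ}
    (hL : (⨆ N, (linComplexityN s N : ℕ∞)) = (L : ℕ∞)) (N : ℕ) :
    linComplexityN s N ≤ L := by
  have : (linComplexityN s N : ℕ∞) ≤ (L : ℕ∞) := hL ▸ le_iSup (fun N => (linComplexityN s N : ℕ∞)) N
  exact_mod_cast this

private lemma pad_witness (s : ℕ → F) (L LN N : ℕ) (hle : LN ≤ L) (cN : Fin LN → F)
    (hval : ∀ i, i + LN < N → s (i + LN) + ∑ ℓ : Fin LN, cN ℓ * s (i + ℓ.1) = 0) :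
    ∃ cf : Fin L → F, ∀ i, i + L < N →
      s (i + L) + ∑ ℓ ∈ Finset.range L,
        (if h : ℓ < L then cf ⟨ℓ, h⟩ else 0) * s (i + ℓ) = 0 := by
  classical
  set D := L - LN with hD
  set extN : ℕ → F := fun ℓ => if h : ℓ < LN then cN ⟨ℓ, h⟩ else 0 with hextN
  have hvalR : ∀ i, i + LN < N →
      s (i + LN) + ∑ ℓ ∈ Finset.range LN, extN ℓ * s (i + ℓ) = 0 := by
    intro i hi
    have h0 := hval i hi
    rw [← Fin.sum_univ_eq_sum_range (fun ℓ => extN ℓ * s (i + ℓ)) LN]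
    have heq : ∀ ℓ : Fin LN, extN ℓ.1 * s (i + ℓ.1) = cN ℓ * s (i + ℓ.1) := by
      intro ℓ; rw [hextN]; simp [ℓ.isLt]
    rw [Finset.sum_congr rfl fun ℓ _ => heq ℓ]
    exact h0
  refine ⟨fun ℓ => if D ≤ ℓ.1 then extN (ℓ.1 - D) else 0, fun i hi => ?_⟩
  have hsplit : Finset.range L = Finset.range (D + LN) := by congr 1; omega
  rw [hsplit, Finset.sum_range_add]
  have hz1 : ∑ ℓ ∈ Finset.range D,
      (if h : ℓ < L then (if D ≤ (⟨ℓ, h⟩ : Fin L).1 then extN ((⟨ℓ, h⟩ : Fin L).1 - D) else 0) else 0)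
        * s (i + ℓ) = 0 := by
    refine Finset.sum_eq_zero fun ℓ hℓ => ?_
    simp only [Finset.mem_range] at hℓ
    have hℓL : ℓ < L := by omega
    rw [dif_pos hℓL, if_neg (by simp; omega), zero_mul]
  rw [hz1, zero_add]
  have hterm : ∀ ℓ ∈ Finset.range LN,
      (if h : D + ℓ < L then
          (if D ≤ (⟨D + ℓ, h⟩ : Fin L).1 then extN ((⟨D + ℓ, h⟩ : Fin L).1 - D) else 0) else 0)
        * s (i + (D + ℓ)) = extN ℓ * s ((i + D) + ℓ) := by
    intro ℓ hℓ
    simp only [Finset.mem_range] at hℓ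
    have h1 : D + ℓ < L := by omega
    rw [dif_pos h1, if_pos (by simp)]
    have h2 : D + ℓ - D = ℓ := by omega
    rw [show (⟨D + ℓ, h1⟩ : Fin L).1 = D + ℓ from rfl, h2, add_assoc]
  rw [Finset.sum_congr rfl hterm]
  have h3 : i + L = (i + D) + LN := by omega
  rw [h3]
  exact hvalR (i + D) (by omega)

private lemma exists_grec [Fintype F] {s : ℕ → F} {L : ℕ}
    (hL : (⨆ N, (linComplexityN s N : ℕ∞)) = (L : ℕ∞)) :
    ∃ c : ℕ → F, GRec s L c := by
  classical
  have ha : ∀ N, ∃ cf : Fin L → F, ∀ i, i + L < N →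
      s (i + L) + ∑ ℓ ∈ Finset.range L,
        (if h : ℓ < L then cf ⟨ℓ, h⟩ else 0) * s (i + ℓ) = 0 := by
    intro N
    obtain ⟨cN, hval⟩ := linComplexityN_mem s N
    exact pad_witness s L _ N (linComplexityN_le hL N) cN hval
  choose f hf using ha
  obtain ⟨c0, hc0⟩ := Finite.exists_infinite_fiber f
  refine ⟨fun ℓ => if h : ℓ < L then c0 ⟨ℓ, h⟩ else 0, fun i => ?_⟩
  have hinf : (f ⁻¹' {c0}).Infinite := Set.infinite_coe_iff.mp hc0
  obtain ⟨N, hN1, hN2⟩ := hinf.exists_gt (i + L)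
  have hfN : f N = c0 := hN1
  have h4 := hf N i hN2
  rwa [hfN] at h4

private lemma one_le_L {s : ℕ → F} {L : ℕ}
    (hGne : PowerSeries.mk s ≠ 0) (c : ℕ → F) (hc : GRec s L c) (hL0 : L = 0) : False := by
  apply hGne
  ext n
  have := hc n
  rw [hL0] at this
  simpa using this

private lemma grec_c0_ne {s : ℕ → F} {T L : ℕ} (hT : 0 < T)
    (hper : ∀ i, s (i + T) = s i)
    (hL : (⨆ N, (linComplexityN s N : ℕ∞)) = (L : ℕ∞)) (hL1 : 1 ≤ L)
    (c : ℕ → F) (hc : GRec s L c) : c 0 ≠ 0 := by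
  intro h0
  have aux : ∀ j, 1 ≤ j →
      s (j + (L - 1)) + ∑ ℓ ∈ Finset.range (L - 1), c (ℓ + 1) * s (j + ℓ) = 0 := by
    intro j hj
    have h1 := hc (j - 1)
    have hsplit : Finset.range L = Finset.range ((L - 1) + 1) := by congr 1; omega
    rw [hsplit, Finset.sum_range_succ', h0, zero_mul, add_zero] at h1
    have e1 : j - 1 + L = j + (L - 1) := by omega
    rw [e1] at h1
    have e2 : ∀ ℓ ∈ Finset.range (L - 1),
        c (ℓ + 1) * s (j - 1 + (ℓ + 1)) = c (ℓ + 1) * s (j + ℓ) := by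
      intro ℓ _; congr 2; omega
    rwa [Finset.sum_congr rfl e2] at h1
  have hrec' : GRec s (L - 1) (fun ℓ => c (ℓ + 1)) := by
    intro j
    rcases Nat.eq_zero_or_pos j with hj | hj
    · subst hj
      have h2 := aux T hT
      have e3 : s (T + (L - 1)) = s (0 + (L - 1)) := by
        rw [add_comm T (L - 1), hper (L - 1), zero_add]
      have e4 : ∀ ℓ ∈ Finset.range (L - 1),
          c (ℓ + 1) * s (T + ℓ) = c (ℓ + 1) * s (0 + ℓ) := by
        intro ℓ _
        rw [add_comm T ℓ, hper ℓ, zero_add]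
      rwa [e3, Finset.sum_congr rfl e4] at h2
    · exact aux j hj
  have := le_of_grec hL hrec'
  omega

private lemma exists_QP [Fintype F] {s : ℕ → F} {T L : ℕ} (hT : 0 < T)
    (hper : ∀ i, s (i + T) = s i)
    (hL : (⨆ N, (linComplexityN s N : ℕ∞)) = (L : ℕ∞))
    (hGne : PowerSeries.mk s ≠ 0) :
    ∃ (c : ℕ → F) (Q P : Polynomial F), GRec s L c ∧ 1 ≤ L ∧
      Q.coeff 0 = 1 ∧ Q.natDegree = L ∧ P.natDegree < L ∧
      (Q : PowerSeries F) * PowerSeries.mk s = (P : PowerSeries F) ∧ IsCoprime P Q := by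
  classical
  obtain ⟨c, hc⟩ := exists_grec hL
  have hL1 : 1 ≤ L := by
    rcases Nat.eq_zero_or_pos L with h | h
    · exact absurd (one_le_L hGne c hc h) id
    · exact h
  have hc0 : c 0 ≠ 0 := grec_c0_ne hT hper hL hL1 c hc
  set Q : Polynomial F := Qof L c with hQdef
  have hQ0 : Q.coeff 0 = 1 := Qof_coeff_zero L c
  have hQL : Q.coeff L = c 0 := by
    rw [hQdef, Qof_coeff, if_pos le_rfl, if_neg (by omega), Nat.sub_self]
  have hQdeg : Q.natDegree = L :=
    Polynomial.natDegree_eq_of_le_of_coeff_ne_zero (Qof_natDegree_le L c) (hQL ▸ hc0)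
  have hz := Qof_mul_coeff s L c hc
  set P : Polynomial F := PowerSeries.trunc L ((Q : PowerSeries F) * PowerSeries.mk s) with hPdef
  have hQP : (Q : PowerSeries F) * PowerSeries.mk s = (P : PowerSeries F) := by
    ext n
    rw [Polynomial.coeff_coe, hPdef, PowerSeries.coeff_trunc]
    by_cases hn : n < L
    · rw [if_pos hn]
    · rw [if_neg hn]
      exact hz n (by omega)
  have hPdeg : P.natDegree < L := by
    rcases eq_or_ne P 0 with h | h
    · rw [h, Polynomial.natDegree_zero]; omega
    · rw [Polynomial.natDegree_lt_iff_degree_lt h]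
      exact PowerSeries.degree_trunc_lt _ _
  refine ⟨c, Q, P, hc, hL1, hQ0, hQdeg, hPdeg, hQP, ?_⟩
  by_cases hu : IsUnit (EuclideanDomain.gcd P Q)
  · exact EuclideanDomain.gcd_isUnit_iff.mp hu
  exfalso
  set g := EuclideanDomain.gcd P Q with hgdef
  have hg0 : g ≠ 0 := by
    intro h
    rw [hgdef, EuclideanDomain.gcd_eq_zero_iff] at h
    have : Q.coeff 0 = 0 := by rw [h.2]; simp
    rw [hQ0] at this; exact one_ne_zero this
  obtain ⟨P₁, hP1⟩ : g ∣ P := EuclideanDomain.gcd_dvd_left P Q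
  obtain ⟨Q₁, hQ1⟩ : g ∣ Q := EuclideanDomain.gcd_dvd_right P Q
  have hQ10 : Q₁ ≠ 0 := by
    intro h; rw [h, mul_zero] at hQ1
    have : Q.coeff 0 = 0 := by rw [hQ1]; simp
    rw [hQ0] at this; exact one_ne_zero this
  have hcoeff : g.coeff 0 * Q₁.coeff 0 = 1 := by
    rw [← Polynomial.mul_coeff_zero, ← hQ1, hQ0]
  have hQ1c0 : Q₁.coeff 0 ≠ 0 := by
    intro h; rw [h, mul_zero] at hcoeff; exact one_ne_zero hcoeff.symm
  have hGQ1 : (Q₁ : PowerSeries F) * PowerSeries.mk s = (P₁ : PowerSeries F) := by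
    have h1 : ((g * Q₁ : Polynomial F) : PowerSeries F) * PowerSeries.mk s
        = ((g * P₁ : Polynomial F) : PowerSeries F) := by rw [← hQ1, ← hP1]; exact hQP
    rw [Polynomial.coe_mul, Polynomial.coe_mul, mul_assoc] at h1
    exact mul_left_cancel₀ (by rwa [Ne, Polynomial.coe_eq_zero_iff]) h1
  have hdegQ1 : L = g.natDegree + Q₁.natDegree := by
    rw [← hQdeg, hQ1]; exact Polynomial.natDegree_mul hg0 hQ10
  have hgd1 : 1 ≤ g.natDegree := by
    rcases Nat.eq_zero_or_pos g.natDegree with h | h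
    · exfalso
      apply hu
      rw [hgdef] at h ⊢
      rw [Polynomial.eq_C_of_natDegree_eq_zero h]
      refine Polynomial.isUnit_C.mpr (Ne.isUnit ?_)
      intro hz0
      apply hg0
      rw [hgdef, Polynomial.eq_C_of_natDegree_eq_zero h, hz0, map_zero]
    · exact h
  have hz1 : ∀ n, Q₁.natDegree ≤ n →
      PowerSeries.coeff n ((Q₁ : PowerSeries F) * PowerSeries.mk s) = 0 := by
    intro n hn
    rw [hGQ1, Polynomial.coeff_coe]
    rcases eq_or_ne P₁ 0 with h | h
    · rw [h]; simp
    · apply Polynomial.coeff_eq_zero_of_natDegree_lt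
      have hPne : P ≠ 0 := by rw [hP1]; exact mul_ne_zero hg0 h
      have : P.natDegree = g.natDegree + P₁.natDegree := by
        rw [hP1]; exact Polynomial.natDegree_mul hg0 h
      omega
  have hle := le_of_grec hL (grec_of_poly Q₁ s Q₁.natDegree hQ1c0 le_rfl hz1)
  omega

private lemma lower_bound
    (s : ℕ → F) (L N : ℕ) (hL1 : 1 ≤ L) (hN : L * (L + 1) < N)
    (Q P : Polynomial F) (hQ0 : Q.coeff 0 = 1) (hQdeg : Q.natDegree = L)
    (hPdeg : P.natDegree < L)
    (hQP : (Q : PowerSeries F) * PowerSeries.mk s = (P : PowerSeries F))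
    (hcop : IsCoprime P Q)
    (h : MvPolynomial (Fin 2) F) (hh0 : h ≠ 0) (hhd : h.totalDegree ≤ L)
    (hdvd : (PowerSeries.X : PowerSeries F) ^ N ∣
      MvPolynomial.aeval ![(PowerSeries.X : PowerSeries F), PowerSeries.mk s] h) : False := by
  classical
  have hQne : Q ≠ 0 := by
    intro hq
    rw [hq, Polynomial.coeff_zero] at hQ0
    exact one_ne_zero hQ0.symm
  have hm01 : ∀ m ∈ h.support, m 0 + m 1 ≤ L := by
    intro m hm
    have h1 := MvPolynomial.le_totalDegree hm
    have h2 : (m.sum fun _ e => e) = m 0 + m 1 := by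
      rw [Finsupp.sum_fintype _ _ (fun _ => rfl)]
      exact Fin.sum_univ_two m
    rw [h2] at h1
    omega
  set hj : ℕ → Polynomial F := fun j =>
    ∑ m ∈ h.support.filter (fun m => m 1 = j),
      Polynomial.C (MvPolynomial.coeff m h) * Polynomial.X ^ (m 0) with hjdef
  have hjdeg : ∀ j, (hj j).natDegree ≤ L - j := by
    intro j
    refine Polynomial.natDegree_sum_le_of_forall_le _ _ fun m hm => ?_
    simp only [Finset.mem_filter] at hm
    have h3 := hm01 m hm.1
    calc (Polynomial.C (MvPolynomial.coeff m h) * Polynomial.X ^ (m 0)).natDegree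
        ≤ (Polynomial.X ^ (m 0) : Polynomial F).natDegree :=
          Polynomial.natDegree_C_mul_le _ _
      _ = m 0 := Polynomial.natDegree_X_pow _
      _ ≤ L - j := by omega
  set R : Polynomial F := ∑ j ∈ Finset.range (L + 1), hj j * P ^ j * Q ^ (L - j) with hRdef
  -- Claim A
  have hA : (R : PowerSeries F) = (Q : PowerSeries F) ^ L *
      MvPolynomial.aeval ![(PowerSeries.X : PowerSeries F), PowerSeries.mk s] h := by
    have haev : MvPolynomial.aeval ![(PowerSeries.X : PowerSeries F), PowerSeries.mk s] h
        = ∑ m ∈ h.support, PowerSeries.C (MvPolynomial.coeff m h) *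
            (PowerSeries.X ^ (m 0) * (PowerSeries.mk s) ^ (m 1)) := by
      rw [MvPolynomial.aeval_def, MvPolynomial.eval₂_eq']
      refine Finset.sum_congr rfl fun m _ => ?_
      rw [Fin.prod_univ_two]
      simp only [Matrix.cons_val_zero, Matrix.cons_val_one, Matrix.head_cons]
      rw [← PowerSeries.C_eq_algebraMap]
    rw [haev, Finset.mul_sum]
    have hco : (R : PowerSeries F)
        = ∑ j ∈ Finset.range (L + 1), ∑ m ∈ h.support.filter (fun m => m 1 = j),
            (PowerSeries.C (MvPolynomial.coeff m h) * PowerSeries.X ^ (m 0))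
              * (P : PowerSeries F) ^ j * (Q : PowerSeries F) ^ (L - j) := by
      rw [hRdef]
      have hmap := map_sum (Polynomial.coeToPowerSeries.ringHom (R := F))
        (fun j => hj j * P ^ j * Q ^ (L - j)) (Finset.range (L + 1))
      simp only [Polynomial.coeToPowerSeries.ringHom_apply] at hmap
      rw [hmap]
      refine Finset.sum_congr rfl fun j _ => ?_
      rw [Polynomial.coe_mul, Polynomial.coe_mul, Polynomial.coe_pow, Polynomial.coe_pow]
      have hmap2 := map_sum (Polynomial.coeToPowerSeries.ringHom (R := F))
        (fun m => Polynomial.C (MvPolynomial.coeff m h) * Polynomial.X ^ (m 0))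
        (h.support.filter (fun m => m 1 = j))
      simp only [Polynomial.coeToPowerSeries.ringHom_apply] at hmap2
      simp only [hjdef]
      rw [hmap2, Finset.sum_mul, Finset.sum_mul]
      refine Finset.sum_congr rfl fun m _ => ?_
      rw [Polynomial.coe_mul, Polynomial.coe_pow, Polynomial.coe_C, Polynomial.coe_X]
    rw [hco]
    rw [← Finset.sum_fiberwise_of_maps_to
      (fun m hm => Finset.mem_range.mpr (by have := hm01 m hm; omega) : ∀ m ∈ h.support,
        m 1 ∈ Finset.range (L + 1))
      (fun m => ((Q : PowerSeries F) ^ L * (PowerSeries.C (MvPolynomial.coeff m h) *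
        (PowerSeries.X ^ (m 0) * (PowerSeries.mk s) ^ (m 1))) : PowerSeries F))]
    refine Finset.sum_congr rfl fun j _ => Finset.sum_congr rfl fun m hm => ?_
    simp only [Finset.mem_filter] at hm
    have hmL : m 1 ≤ L := by have := hm01 m hm.1; omega
    have e1 : (Q : PowerSeries F) ^ L
        = (Q : PowerSeries F) ^ (L - m 1) * (Q : PowerSeries F) ^ (m 1) := by
      rw [← pow_add]; congr 1; omega
    have e2 : (Q : PowerSeries F) ^ (m 1) * (PowerSeries.mk s) ^ (m 1)
        = (P : PowerSeries F) ^ (m 1) := by rw [← mul_pow, hQP]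
    rw [← hm.2, e1, ← e2]
    ring
  -- degree bound for R
  have hRdeg : R.natDegree ≤ L * (L + 1) := by
    rw [hRdef]
    refine Polynomial.natDegree_sum_le_of_forall_le _ _ fun j hjm => ?_
    simp only [Finset.mem_range] at hjm
    have d1 := hjdeg j
    have d2 : ((P : Polynomial F) ^ j).natDegree ≤ j * (L - 1) :=
      Polynomial.natDegree_pow_le.trans (Nat.mul_le_mul_left _ (by omega))
    have d3 : ((Q : Polynomial F) ^ (L - j)).natDegree ≤ (L - j) * L :=
      Polynomial.natDegree_pow_le.trans (by rw [hQdeg])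
    have c1 : (hj j * P ^ j * Q ^ (L - j)).natDegree
        ≤ (hj j * P ^ j).natDegree + ((Q : Polynomial F) ^ (L - j)).natDegree :=
      Polynomial.natDegree_mul_le
    have c2 : (hj j * P ^ j).natDegree ≤ (hj j).natDegree + ((P : Polynomial F) ^ j).natDegree :=
      Polynomial.natDegree_mul_le
    have hb1 : j * (L - 1) ≤ j * L := Nat.mul_le_mul_left _ (by omega)
    have hb2 : j * L ≤ L * L := Nat.mul_le_mul_right _ (by omega)
    have hb3 : (L - j) * L + j * L = L * L := by
      rw [← Nat.add_mul]
      congr 1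
      omega
    have hb4 : L * (L + 1) = L * L + L := by ring
    omega
  -- R vanishes
  have hXdvd : (PowerSeries.X : PowerSeries F) ^ N ∣ (R : PowerSeries F) := by
    rw [hA]; exact Dvd.dvd.mul_left hdvd _
  have hR0 : R = 0 := by
    ext n
    rw [Polynomial.coeff_zero]
    rcases lt_or_ge n N with hn | hn
    · have h4 := (PowerSeries.X_pow_dvd_iff.mp hXdvd) n hn
      rwa [Polynomial.coeff_coe] at h4
    · exact Polynomial.coeff_eq_zero_of_natDegree_lt (by omega)
  -- extract the top fiber
  have hsupp : h.support.Nonempty := by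
    obtain ⟨d, hd⟩ := MvPolynomial.ne_zero_iff.mp hh0
    exact ⟨d, MvPolynomial.mem_support_iff.mpr hd⟩
  set J := h.support.image (fun m => m 1) with hJdef
  have hJne : J.Nonempty := hsupp.image _
  set j0 := J.max' hJne with hj0def
  obtain ⟨m0, hm0supp, hm0⟩ : ∃ m ∈ h.support, m 1 = j0 :=
    Finset.mem_image.mp (J.max'_mem hJne)
  have hj0L : j0 ≤ L := by have := hm01 m0 hm0supp; omega
  have hcoeffj0 : (hj j0).coeff (m0 0) = MvPolynomial.coeff m0 h := by
    simp only [hjdef]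
    rw [Polynomial.finset_sum_coeff]
    rw [Finset.sum_eq_single m0]
    · simp [Polynomial.coeff_C_mul, Polynomial.coeff_X_pow]
    · intro m hm hne
      simp only [Finset.mem_filter] at hm
      have hne0 : m0 0 ≠ m 0 := by
        intro he
        apply hne
        have hall : ∀ i : Fin 2, m i = m0 i := by
          rw [Fin.forall_fin_two]
          exact ⟨he.symm, hm.2.trans hm0.symm⟩
        exact Finsupp.ext hall
      rw [Polynomial.coeff_C_mul, Polynomial.coeff_X_pow, if_neg hne0, mul_zero]
    · intro hnm
      exact absurd (Finset.mem_filter.mpr ⟨hm0supp, hm0⟩) hnm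
  have hjne : hj j0 ≠ 0 := by
    intro hz
    rw [hz, Polynomial.coeff_zero] at hcoeffj0
    exact (MvPolynomial.mem_support_iff.mp hm0supp) hcoeffj0.symm
  have hjzero : ∀ j, j0 < j → hj j = 0 := by
    intro j hjgt
    simp only [hjdef]
    have hempty : h.support.filter (fun m => m 1 = j) = ∅ := by
      refine Finset.filter_false_of_mem fun m hm => ?_
      intro hmj
      have : m 1 ≤ j0 := Finset.le_max' J (m 1) (Finset.mem_image_of_mem _ hm)
      omega
    rw [hempty, Finset.sum_empty]
  have hRsum : R = ∑ j ∈ Finset.range (j0 + 1), hj j * P ^ j * Q ^ (L - j) := by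
    rw [hRdef]
    refine (Finset.sum_subset (Finset.range_subset_range.2 (by omega)) fun j hj1 hj2 => ?_).symm
    simp only [Finset.mem_range] at hj1 hj2
    rw [hjzero j (by omega), zero_mul, zero_mul]
  have hfac : ∑ j ∈ Finset.range (j0 + 1), hj j * P ^ j * Q ^ (L - j)
      = Q ^ (L - j0) * ∑ j ∈ Finset.range (j0 + 1), hj j * P ^ j * Q ^ (j0 - j) := by
    rw [Finset.mul_sum]
    refine Finset.sum_congr rfl fun j hjr => ?_
    simp only [Finset.mem_range] at hjr
    have e3 : (Q : Polynomial F) ^ (L - j) = Q ^ (L - j0) * Q ^ (j0 - j) := by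
      rw [← pow_add]; congr 1; omega
    rw [e3]; ring
  have hS0 : ∑ j ∈ Finset.range (j0 + 1), hj j * P ^ j * Q ^ (j0 - j) = 0 := by
    have h5 : (0 : Polynomial F) = Q ^ (L - j0) *
        ∑ j ∈ Finset.range (j0 + 1), hj j * P ^ j * Q ^ (j0 - j) := by
      rw [← hfac, ← hRsum, hR0]
    rcases mul_eq_zero.mp h5.symm with h6 | h6
    · exact absurd h6 (pow_ne_zero _ hQne)
    · exact h6
  rcases Nat.eq_zero_or_pos j0 with hj00 | hj0pos
  · have h7 : hj 0 = 0 := by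
      have := hS0
      rw [hj00] at this
      simpa using this
    exact hjne (hj00 ▸ h7)
  · rw [Finset.sum_range_succ, Nat.sub_self, pow_zero, mul_one] at hS0
    have hdvd2 : Q ∣ hj j0 * P ^ j0 := by
      have e4 : hj j0 * P ^ j0 = -∑ j ∈ Finset.range j0, hj j * P ^ j * Q ^ (j0 - j) := by
        linear_combination hS0
      rw [e4, dvd_neg]
      refine Finset.dvd_sum fun j hjr => ?_
      simp only [Finset.mem_range] at hjr
      exact ⟨hj j * P ^ j * Q ^ (j0 - j - 1), by
        rw [show (Q:Polynomial F) ^ (j0 - j) = Q * Q ^ (j0 - j - 1) by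
          rw [← pow_succ']; congr 1; omega]
        ring⟩
    have hQdvd : Q ∣ hj j0 := ((hcop.pow_left).symm).dvd_of_dvd_mul_right hdvd2
    have hdegle : L ≤ (hj j0).natDegree := by
      rw [← hQdeg]
      exact Polynomial.natDegree_le_of_dvd hQdvd hjne
    have := hjdeg j0
    omega

private lemma coe_eq_sum_range (q : Polynomial F) (n : ℕ) (hn : q.natDegree < n) :
    (q : PowerSeries F) = ∑ k ∈ Finset.range n,
      PowerSeries.C (q.coeff k) * PowerSeries.X ^ k := by
  ext d
  rw [Polynomial.coeff_coe, map_sum]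
  have h1 : ∀ k ∈ Finset.range n,
      PowerSeries.coeff d (PowerSeries.C (q.coeff k) * PowerSeries.X ^ k)
        = if k = d then q.coeff k else 0 := by
    intro k _
    rw [PowerSeries.coeff_C_mul, PowerSeries.coeff_X_pow]
    by_cases hkd : d = k
    · subst hkd; simp
    · rw [if_neg hkd, if_neg (Ne.symm hkd), mul_zero]
  rw [Finset.sum_congr rfl h1, Finset.sum_ite_eq' (Finset.range n) d]
  by_cases hdn : d < n
  · rw [if_pos (Finset.mem_range.mpr hdn)]
  · rw [if_neg (by simp; omega), Polynomial.coeff_eq_zero_of_natDegree_lt (by omega)]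

private lemma upper_bound (s : ℕ → F) (L : ℕ) (Q P : Polynomial F)
    (hQL : Q.coeff L ≠ 0) (hQdeg : Q.natDegree ≤ L) (hPdeg : P.natDegree < L) (hL1 : 1 ≤ L)
    (hQP : (Q : PowerSeries F) * PowerSeries.mk s = (P : PowerSeries F)) :
    ∃ h : MvPolynomial (Fin 2) F, h ≠ 0 ∧ h.totalDegree = L + 1 ∧
      MvPolynomial.aeval ![(PowerSeries.X : PowerSeries F), PowerSeries.mk s] h = 0 := by
  classical
  set μ : Fin 2 →₀ ℕ := Finsupp.single 0 L + Finsupp.single 1 1 with hμdef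
  set h0 : MvPolynomial (Fin 2) F :=
    (∑ k ∈ Finset.range (L + 1),
      MvPolynomial.monomial (Finsupp.single 0 k + Finsupp.single 1 1) (Q.coeff k))
    - ∑ k ∈ Finset.range (L + 1),
        MvPolynomial.monomial (Finsupp.single (0 : Fin 2) k) (P.coeff k) with hh0def
  have hμ0 : μ 0 = L := by simp [hμdef, Finsupp.single_apply]
  have hμ1 : μ 1 = 1 := by simp [hμdef, Finsupp.single_apply]
  have hcoeffμ : MvPolynomial.coeff μ h0 = Q.coeff L := by
    rw [hh0def, MvPolynomial.coeff_sub, MvPolynomial.coeff_sum, MvPolynomial.coeff_sum]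
    have e1 : ∑ k ∈ Finset.range (L + 1),
        MvPolynomial.coeff μ (MvPolynomial.monomial
          (Finsupp.single 0 k + Finsupp.single 1 1) (Q.coeff k)) = Q.coeff L := by
      rw [Finset.sum_eq_single L]
      · rw [MvPolynomial.coeff_monomial, if_pos rfl]
      · intro k _ hkL
        rw [MvPolynomial.coeff_monomial, if_neg]
        intro he
        apply hkL
        have := DFunLike.congr_fun he 0
        simpa [Finsupp.single_apply, hμ0] using this
      · intro habs
        exact absurd (Finset.self_mem_range_succ L) habs
    have e2 : ∑ k ∈ Finset.range (L + 1),
        MvPolynomial.coeff μ (MvPolynomial.monomial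
          (Finsupp.single (0 : Fin 2) k) (P.coeff k)) = 0 := by
      refine Finset.sum_eq_zero fun k _ => ?_
      rw [MvPolynomial.coeff_monomial, if_neg]
      intro he
      have := DFunLike.congr_fun he 1
      simp [Finsupp.single_apply, hμdef] at this
    rw [e1, e2, sub_zero]
  have hμsum : (μ.sum fun _ e => e) = L + 1 := by
    rw [Finsupp.sum_fintype _ _ (fun _ => rfl), Fin.sum_univ_two, hμ0, hμ1]
  have hne : h0 ≠ 0 := by
    intro hz
    rw [hz, MvPolynomial.coeff_zero] at hcoeffμ
    exact hQL hcoeffμ.symm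
  have htd : h0.totalDegree = L + 1 := by
    apply le_antisymm
    · rw [hh0def]
      refine (MvPolynomial.totalDegree_sub _ _).trans (max_le ?_ ?_)
      · refine (MvPolynomial.totalDegree_finset_sum _ _).trans (Finset.sup_le fun k hk => ?_)
        refine (MvPolynomial.totalDegree_monomial_le _ _).trans ?_
        have : ((Finsupp.single (0 : Fin 2) k + Finsupp.single 1 1).sum fun _ => id) = k + 1 := by
          rw [Finsupp.sum_fintype _ _ (fun _ => rfl), Fin.sum_univ_two]
          simp [Finsupp.single_apply]
        rw [this]
        simp only [Finset.mem_range] at hk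
        omega
      · refine (MvPolynomial.totalDegree_finset_sum _ _).trans (Finset.sup_le fun k hk => ?_)
        refine (MvPolynomial.totalDegree_monomial_le _ _).trans ?_
        have : ((Finsupp.single (0 : Fin 2) k).sum fun _ => id) = k := by
          rw [Finsupp.sum_fintype _ _ (fun _ => rfl), Fin.sum_univ_two]
          simp [Finsupp.single_apply]
        rw [this]
        simp only [Finset.mem_range] at hk
        omega
    · have hmem : μ ∈ h0.support := MvPolynomial.mem_support_iff.mpr (by
        rw [hcoeffμ]; exact hQL)
      have := MvPolynomial.le_totalDegree hmem
      omega
  refine ⟨h0, hne, htd, ?_⟩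
  rw [hh0def, map_sub, map_sum, map_sum]
  have e1 : ∀ k ∈ Finset.range (L + 1),
      MvPolynomial.aeval ![(PowerSeries.X : PowerSeries F), PowerSeries.mk s]
        (MvPolynomial.monomial (Finsupp.single 0 k + Finsupp.single 1 1) (Q.coeff k))
      = PowerSeries.C (Q.coeff k) * PowerSeries.X ^ k * PowerSeries.mk s := by
    intro k _
    rw [MvPolynomial.aeval_monomial]
    rw [Finsupp.prod_fintype _ _ (fun i => pow_zero _), Fin.prod_univ_two]
    simp only [Finsupp.add_apply, Finsupp.single_apply]
    norm_num
    ring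
  have e2 : ∀ k ∈ Finset.range (L + 1),
      MvPolynomial.aeval ![(PowerSeries.X : PowerSeries F), PowerSeries.mk s]
        (MvPolynomial.monomial (Finsupp.single (0 : Fin 2) k) (P.coeff k))
      = PowerSeries.C (P.coeff k) * PowerSeries.X ^ k := by
    intro k _
    rw [MvPolynomial.aeval_monomial]
    rw [Finsupp.prod_fintype _ _ (fun i => pow_zero _), Fin.prod_univ_two]
    simp only [Finsupp.single_apply]
    norm_num
  rw [Finset.sum_congr rfl e1, Finset.sum_congr rfl e2]
  rw [← Finset.sum_mul, ← coe_eq_sum_range Q (L + 1) (by omega),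
    ← coe_eq_sum_range P (L + 1) (by omega), hQP, sub_self]

end ExpComplexityAux

theorem expComplexityN_eq_of_purely_periodic {F : Type*} [Field F] [Fintype F]
    (s : ℕ → F) (T L : ℕ) (hT : 0 < T)
    (hper : ∀ i, s (i + T) = s i)
    (hL : (⨆ N, (linComplexityN s N : ℕ∞)) = (L : ℕ∞))
    (hGne : PowerSeries.mk s ≠ 0)
    (N : ℕ) (hN : L * (L + 1) < N) :
    expComplexityN s N = L + 1 := by
  classical
  obtain ⟨c, Q, P, hc, hL1, hQ0, hQdeg, hPdeg, hQP, hcop⟩ := exists_QP hT hper hL hGne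
  have hLN : L < N := by
    have : L * 1 ≤ L * (L + 1) := Nat.mul_le_mul_left L (by omega)
    omega
  have hns : ¬ ∀ i < N, s i = 0 := by
    intro hall
    apply hGne
    have hzero : ∀ i, s i = 0 := by
      intro i
      induction i using Nat.strong_induction_on with
      | _ i ih =>
        by_cases hi : i < N
        · exact hall i hi
        · have hiL : L ≤ i := by omega
          have h1 := hc (i - L)
          rw [Nat.sub_add_cancel hiL] at h1
          have h2 : ∑ ℓ ∈ Finset.range L, c ℓ * s (i - L + ℓ) = 0 :=
            Finset.sum_eq_zero fun ℓ hℓ => by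
              rw [ih (i - L + ℓ) (by simp only [Finset.mem_range] at hℓ; omega), mul_zero]
          rw [h2, add_zero] at h1
          exact h1
    ext n
    simp [hzero]
  have hQne : Q ≠ 0 := by
    intro hq
    rw [hq, Polynomial.coeff_zero] at hQ0
    exact one_ne_zero hQ0.symm
  have hQL : Q.coeff L ≠ 0 := by
    rw [← hQdeg]
    exact Polynomial.leadingCoeff_ne_zero.mpr hQne
  obtain ⟨h0, hh0ne, hh0deg, hh0aev⟩ := upper_bound s L Q P hQL (le_of_eq hQdeg) hPdeg hL1 hQP
  rw [expComplexityN, if_neg hns]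
  apply le_antisymm
  · exact Nat.sInf_le ⟨h0, hh0ne, hh0deg, by rw [hh0aev]; exact dvd_zero _⟩
  · refine le_csInf ⟨L + 1, h0, hh0ne, hh0deg, by rw [hh0aev]; exact dvd_zero _⟩ ?_
    rintro d ⟨h, hne, hdeg, hdvd⟩
    by_contra hlt
    push_neg at hlt
    exact lower_bound s L N hL1 hN Q P hQ0 hQdeg hPdeg hQP hcop h hne
      (by rw [hdeg]; omega) hdvd
end

section
/- Let p be a prime and 1 ≤ k ≤ p−1. Let A = (a_i)_{i≥0} be the p-periodic sequence over F_p with a_i = binom(i+k, k) mod p. Then the linear complexity of A equals k + 1. -/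
/-!
The sequence `s i = (i + k).choose k` has `(k + 1)`-st forward difference zero, so it
satisfies the recurrence with characteristic polynomial `(X - 1) ^ (k + 1)`, and
`L_N(s) ≤ k + 1` for all `N`.
Conversely, by Lucas' theorem the `k` terms before index `p` vanish modulo `p` while `s p = 1`,
and no recurrence of length at most `k` can produce a nonzero term from `k` zeros.
-/

open Finset fwdDiff

section LinearComplexity

variable {F : Type*} [Field F] {s : ℕ → F}

theorem linComplexityN_le_order (E : LinearRecurrence F) (hs : E.IsSolution s) (N : ℕ) :
    linComplexityN s N ≤ E.order :=
  Nat.sInf_le ⟨-E.coeffs, fun i _ => by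
    simp only [hs i, Pi.neg_apply, neg_mul, sum_neg_distrib, add_neg_cancel]⟩

theorem lt_linComplexityN_of_zeros {m n : ℕ} (hmn : m ≤ n)
    (hzero : ∀ j, n - m ≤ j → j < n → s j = 0) (hn : s n ≠ 0) :
    m < linComplexityN s (n + 1) := by
  unfold linComplexityN
  refine Nat.lt_of_succ_le (le_csInf ⟨n + 1, 0, fun i hi => absurd hi (by omega)⟩ ?_)
  rintro L ⟨c, hc⟩
  by_contra! hL
  have hrec := hc (n - L) (by omega)
  rw [Nat.sub_add_cancel (by omega)] at hrec
  have hprev : ∀ ℓ : Fin L, s (n - L + ℓ.1) = 0 := fun ℓ =>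
    hzero _ (by omega) (by omega)
  simp only [hprev, mul_zero, sum_const_zero, add_zero] at hrec
  exact hn hrec

end LinearComplexity

section ForwardDifference

theorem fwdDiff_iter_comp_addMonoidHom {G G' : Type*} [AddCommGroup G] [AddCommGroup G']
    (φ : G →+ G') (f : ℕ → G) (n : ℕ) :
    (Δ_[1])^[n] (φ ∘ f) = φ ∘ (Δ_[1])^[n] f := by
  funext y
  simp only [fwdDiff_iter_eq_sum_shift, Function.comp_apply, map_sum, map_zsmul]

/-- The recurrence with characteristic polynomial `(X - 1) ^ L`. -/
def fwdDiffRecurrence (R : Type*) [CommRing R] (L : ℕ) : LinearRecurrence R :=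
  ⟨L, fun ℓ => -((-1) ^ (L - ℓ.1) * L.choose ℓ.1)⟩

theorem isSolution_fwdDiffRecurrence {R : Type*} [CommRing R] {L : ℕ} {s : ℕ → R}
    (hs : (Δ_[1])^[L] s = 0) : (fwdDiffRecurrence R L).IsSolution s := by
  intro i
  have h := congr_fun hs i
  rw [fwdDiff_iter_eq_sum_shift, sum_range_succ] at h
  simp only [Nat.sub_self, pow_zero, Nat.choose_self, Nat.cast_one,
    one_smul, smul_eq_mul, mul_one, zsmul_eq_mul, Int.cast_mul, Int.cast_pow, Int.cast_neg,
    Int.cast_one, Int.cast_natCast, Pi.zero_apply] at h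
  change s (i + L) = ∑ ℓ : Fin L, -((-1) ^ (L - ℓ.1) * (L.choose ℓ.1 : R)) * s (i + ℓ)
  rw [Fin.sum_univ_eq_sum_range (fun ℓ => -((-1) ^ (L - ℓ) * (L.choose ℓ : R)) * s (i + ℓ))]
  simp only [neg_mul, sum_neg_distrib]
  linear_combination h

theorem fwdDiff_iter_choose_add_eq_zero {R : Type*} [Ring R] (k : ℕ) :
    (Δ_[1])^[k + 1] (fun i : ℕ => ((i + k).choose k : R)) = 0 := by
  have hℤ : (Δ_[1])^[k + 1] (fun i : ℕ => ((i.choose k : ℕ) : ℤ)) = 0 := by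
    have := fwdDiff_iter_choose 0 k
    rw [add_zero] at this
    rw [Function.iterate_succ_apply', this]
    funext x
    simp [fwdDiff]
  have hcast : (Int.castAddHom R ∘ fun i : ℕ => ((i.choose k : ℕ) : ℤ)) =
      fun i => (i.choose k : R) := by
    funext i
    simp
  have := fwdDiff_iter_comp_addMonoidHom (Int.castAddHom R)
    (fun i : ℕ => ((i.choose k : ℕ) : ℤ)) (k + 1)
  rw [hcast, hℤ] at this
  funext y
  rw [fwdDiff_iter_comp_add (f := fun i : ℕ => (i.choose k : R)), this]
  simp

end ForwardDifference

theorem ZMod.natCast_choose_prime_add {p m k : ℕ} [Fact p.Prime] (hm : m < p) (hk : k < p) :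
    (((p + m).choose k : ℕ) : ZMod p) = m.choose k := by
  have h := (Choose.choose_modEq_choose_mod_mul_choose_div_nat (n := p + m) (k := k) (p := p))
  rw [← ZMod.natCast_eq_natCast_iff] at h
  have hp : 0 < p := (Fact.out : p.Prime).pos
  rw [h, Nat.add_mod_left, Nat.mod_eq_of_lt hm, Nat.mod_eq_of_lt hk, Nat.div_eq_of_lt hk,
    Nat.add_div_left _ hp, Nat.div_eq_of_lt hm]
  simp

theorem linComplexity_binomial_sequence_general (p k : ℕ) [Fact p.Prime]
    (hk2 : k ≤ p - 1) :
    (⨆ N, (linComplexityN (fun i => (((i + k).choose k : ℕ) : ZMod p)) N : ℕ∞)) = ((k + 1 : ℕ) : ℕ∞) := by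
  set s : ℕ → ZMod p := fun i => (((i + k).choose k : ℕ) : ZMod p)
  have hp : 0 < p := (Fact.out : p.Prime).pos
  have hkp : k < p := by omega
  have upper (N : ℕ) : linComplexityN s N ≤ k + 1 :=
    linComplexityN_le_order _ (isSolution_fwdDiffRecurrence (fwdDiff_iter_choose_add_eq_zero k)) N
  have lower : k < linComplexityN s (p + 1) := by
    refine lt_linComplexityN_of_zeros hkp.le (fun j hj hjp => ?_) ?_
    · have hsj : s j = (((p + (j + k - p)).choose k : ℕ) : ZMod p) := by
        simp only [s, Nat.add_sub_cancel' (show p ≤ j + k by omega)]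
      rw [hsj, ZMod.natCast_choose_prime_add (by omega) hkp, Nat.choose_eq_zero_of_lt (by omega),
        Nat.cast_zero]
    · simp [s, ZMod.natCast_choose_prime_add hkp hkp]
  refine le_antisymm (iSup_le fun N => Nat.cast_le.mpr (upper N)) ?_
  exact (Nat.cast_le.mpr lower).trans (le_iSup (fun N => (linComplexityN s N : ℕ∞)) (p + 1))

theorem linComplexity_binomial_sequence (p k : ℕ) [Fact p.Prime]
    (hk1 : 1 ≤ k) (hk2 : k ≤ p - 1) :
    (⨆ N, (linComplexityN (fun i => (((i + k).choose k : ℕ) : ZMod p)) N : ℕ∞)) = ((k + 1 : ℕ) : ℕ∞) :=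
  linComplexity_binomial_sequence_general p k hk2
end

section
/- Let p be a prime, 1 ≤ k ≤ p−1, and A = (a_i)_{i≥0} the sequence over F_p with a_i = binom(i+k, k) mod p. Then for every N ≥ 1, the N-th linear complexity satisfies L_N(A) ≥ min{k+1, ⌈N/2⌉, p−k}. -/
lemma fact_mul_prod_Ico (i a b : ℕ) (h : a ≤ b) :
    (i + a).factorial * ∏ u ∈ Finset.Ico a b, (i + u + 1) = (i + b).factorial := by
  induction b, h using Nat.le_induction with
  | base => simp
  | succ b hab ih =>
    rw [Finset.prod_Ico_succ_top hab, ← mul_assoc, ih, ← Nat.add_assoc, Nat.factorial_succ]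
    ring

lemma fact_mul_choose (i k l : ℕ) (h : l ≤ k) :
    (k - l).factorial * (i + k).choose (k - l) = ∏ u ∈ Finset.Ico l k, (i + u + 1) := by
  have h1 : k - l ≤ i + k := by omega
  have h2 := Nat.choose_mul_factorial_mul_factorial h1
  have h3 : i + k - (k - l) = i + l := by omega
  rw [h3] at h2
  have h4 := fact_mul_prod_Ico i l k h
  apply Nat.eq_of_mul_eq_mul_left (Nat.factorial_pos (i + l))
  calc (i+l).factorial * ((k-l).factorial * (i+k).choose (k-l))
      = (i + k).choose (k - l) * (k-l).factorial * (i+l).factorial := by ring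
    _ = (i+k).factorial := h2
    _ = (i + l).factorial * ∏ u ∈ Finset.Ico l k, (i + u + 1) := h4.symm

lemma choose_split (i j k L : ℕ) (hjL : j ≤ L) (hLk : L ≤ k) :
    (i + j + k).choose k
      = ∑ l ∈ Finset.range (L + 1), j.choose l * (i + k).choose (k - l) := by
  have h0 : i + j + k = j + (i + k) := by ring
  rw [h0, Nat.add_choose_eq, Finset.Nat.sum_antidiagonal_eq_sum_range_succ_mk]
  symm
  apply Finset.sum_subset
  · exact Finset.range_subset_range.mpr (by omega)
  · intro x _ hx
    have : j < x := by simp only [Finset.mem_range] at hx ⊢; omega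
    rw [Nat.choose_eq_zero_of_lt this, zero_mul]

theorem linComplexityN_binomial_sequence_lower_bound (p k : ℕ) [Fact p.Prime]
    (hk1 : 1 ≤ k) (hk2 : k ≤ p - 1) (N : ℕ) (hN : 1 ≤ N) :
    min (k + 1) (min (N ⌈/⌉ 2) (p - k)) ≤
      linComplexityN (fun i => (((i + k).choose k : ℕ) : ZMod p)) N := by
  classical
  have hp : p.Prime := Fact.out
  have hp2 : 2 ≤ p := hp.two_le
  haveI : NeZero p := ⟨by omega⟩
  set s : ℕ → ZMod p := fun i => (((i + k).choose k : ℕ) : ZMod p) with hs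
  unfold linComplexityN
  apply le_csInf
  · exact ⟨N, fun _ => 0, fun i hi => absurd hi (by omega)⟩
  rintro L ⟨c, hc⟩
  by_contra hcon
  push_neg at hcon
  rw [lt_min_iff, lt_min_iff] at hcon
  obtain ⟨hL1, hL2, hL3⟩ := hcon
  have hLk : L ≤ k := by omega
  have hkp : k < p := by omega
  have hLkp : L + k < p := by omega
  have h2L : 2 * L < N := by
    rw [Nat.ceilDiv_eq_add_pred_div] at hL2
    omega
  -- generic cast nonvanishing
  have hcast : ∀ a : ℕ, 0 < a → a < p → (a : ZMod p) ≠ 0 := by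
    intro a h1 h2 h0
    rw [ZMod.natCast_eq_zero_iff] at h0
    exact absurd (Nat.le_of_dvd h1 h0) (by omega)
  -- the Hankel matrix is singular
  set M : Matrix (Fin (L+1)) (Fin (L+1)) (ZMod p) :=
    Matrix.of (fun i j => s (i.1 + j.1)) with hM
  have hdetM : M.det = 0 := by
    rw [← Matrix.exists_mulVec_eq_zero_iff]
    refine ⟨Fin.snoc c (1 : ZMod p), ?_, ?_⟩
    · intro h0
      have h1 := congrFun h0 (Fin.last L)
      rw [Fin.snoc_last] at h1
      exact one_ne_zero h1
    · funext i
      have hrec := hc i.1 (by omega)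
      show M.mulVec (Fin.snoc c (1 : ZMod p)) i = (0 : Fin (L+1) → ZMod p) i
      simp only [Matrix.mulVec, dotProduct, Pi.zero_apply]
      rw [Fin.sum_univ_castSucc]
      simp only [Fin.snoc_castSucc, Fin.snoc_last, hM, Matrix.of_apply,
        Fin.coe_castSucc, Fin.val_last, mul_one]
      have hsum : ∑ j : Fin L, s (i.1 + j.1) * c j = ∑ j : Fin L, c j * s (i.1 + j.1) :=
        Finset.sum_congr rfl fun j _ => mul_comm _ _
      rw [hsum]
      linear_combination hrec
  -- factor out the Pascal matrix
  set B : Matrix (Fin (L+1)) (Fin (L+1)) (ZMod p) :=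
    Matrix.of (fun i l => (((i.1 + k).choose (k - l.1) : ℕ) : ZMod p)) with hB
  set Cm : Matrix (Fin (L+1)) (Fin (L+1)) (ZMod p) :=
    Matrix.of (fun l j => ((j.1.choose l.1 : ℕ) : ZMod p)) with hCm
  have hMBC : M = B * Cm := by
    ext i j
    rw [Matrix.mul_apply]
    show ((((i.1 + j.1) + k).choose k : ℕ) : ZMod p) = _
    rw [choose_split i.1 j.1 k L (by omega) hLk]
    rw [Nat.cast_sum, ← Fin.sum_univ_eq_sum_range
      (fun l => ((j.1.choose l * (i.1 + k).choose (k - l) : ℕ) : ZMod p)) (L+1)]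
    refine Finset.sum_congr rfl fun l _ => ?_
    push_cast
    rw [mul_comm]
    rfl
  have hdetCm : Cm.det = 1 := by
    have htri : Cm.BlockTriangular id := by
      intro l j hlj
      simp only [hCm, Matrix.of_apply]
      rw [Nat.choose_eq_zero_of_lt (by exact_mod_cast hlj), Nat.cast_zero]
    rw [Matrix.det_of_upperTriangular htri]
    refine Finset.prod_eq_one fun l _ => ?_
    simp [hCm]
  have hdetB : B.det = 0 := by
    have := hdetM
    rw [hMBC, Matrix.det_mul, hdetCm, mul_one] at this
    exact this
  -- factor B into row/column units times a polynomial-evaluation matrix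
  set Rv : Fin (L+1) → ZMod p :=
    fun i => ((∏ u ∈ Finset.Ico L k, (i.1 + u + 1) : ℕ) : ZMod p) with hRv
  set Fv : Fin (L+1) → ZMod p := fun l => (((k - l.1).factorial : ℕ) : ZMod p) with hFv
  set W : Matrix (Fin (L+1)) (Fin (L+1)) (ZMod p) :=
    Matrix.of (fun i l => ((∏ u ∈ Finset.Ico l.1 L, (i.1 + u + 1) : ℕ) : ZMod p)) with hW
  have hkey : (Matrix.of fun (i l : Fin (L+1)) => Fv l * B i l)
      = Matrix.of fun (i l : Fin (L+1)) => Rv i * W i l := by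
    ext i l
    simp only [Matrix.of_apply, hFv, hB, hRv, hW]
    rw [← Nat.cast_mul, ← Nat.cast_mul, fact_mul_choose i.1 k l.1 (le_trans l.is_le hLk)]
    exact congrArg _ (by rw [mul_comm, Finset.prod_Ico_consecutive _ l.is_le hLk])
  have hdets : (∏ l, Fv l) * B.det = (∏ i, Rv i) * W.det := by
    rw [← Matrix.det_mul_row Fv B, ← Matrix.det_mul_column Rv W, hkey]
  rw [hdetB, mul_zero] at hdets
  have hRvne : ∀ i : Fin (L+1), Rv i ≠ 0 := by
    intro i
    simp only [hRv]
    rw [Nat.cast_prod]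
    refine Finset.prod_ne_zero_iff.mpr fun u hu => ?_
    have hu' : u < k := (Finset.mem_Ico.mp hu).2
    exact hcast (i.1 + u + 1) (by omega) (by have := i.is_le; omega)
  have hWdet : W.det ≠ 0 := by
    intro h0
    set v : Fin (L+1) → ZMod p := fun i => (i.1 : ZMod p) with hv
    have hinj : Function.Injective v := by
      intro a b hab
      have ha : (v a).val = a.1 := ZMod.val_natCast_of_lt (by have := a.is_le; omega)
      have hb : (v b).val = b.1 := ZMod.val_natCast_of_lt (by have := b.is_le; omega)
      exact Fin.ext (by rw [← ha, ← hb, hab])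
    set P : Fin (L+1) → Polynomial (ZMod p) :=
      fun j => ∏ u ∈ Finset.Ico (L - j.1) L,
        (Polynomial.X + Polynomial.C ((u + 1 : ℕ) : ZMod p)) with hP
    have hmonic : ∀ j, (P j).Monic :=
      fun j => Polynomial.monic_prod_of_monic _ _ fun u _ => Polynomial.monic_X_add_C _
    have hdeg : ∀ j : Fin (L+1), (P j).natDegree = (j : ℕ) := by
      intro j
      simp only [hP]
      rw [Polynomial.natDegree_prod_of_monic _ _ fun u _ => Polynomial.monic_X_add_C _]
      rw [Finset.sum_congr rfl fun u _ => Polynomial.natDegree_X_add_C _]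
      rw [Finset.sum_const, Nat.card_Ico, smul_eq_mul, mul_one]
      have := j.is_le; omega
    have hvand := Matrix.det_eval_matrixOfPolynomials_eq_det_vandermonde v P hdeg hmonic
    have heq : (Matrix.of fun i j => (P j).eval (v i)) = W.submatrix id Fin.revPerm := by
      ext i j
      simp only [Matrix.of_apply, Matrix.submatrix_apply, id, hW, hP]
      have hidx : ((Fin.revPerm j : Fin (L+1)) : ℕ) = L - (j : ℕ) := by
        simp only [Fin.revPerm_apply, Fin.val_rev]
        omega
      rw [hidx, Polynomial.eval_prod, Nat.cast_prod]
      refine Finset.prod_congr rfl fun u hu => ?_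
      simp only [Polynomial.eval_add, Polynomial.eval_X, Polynomial.eval_C, hv]
      push_cast
      ring
    rw [heq, Matrix.det_permute', h0, mul_zero] at hvand
    exact Matrix.det_vandermonde_ne_zero_iff.mpr hinj hvand
  exact (mul_ne_zero (Finset.prod_ne_zero_iff.mpr fun i _ => hRvne i) hWdet) hdets.symm
end

section
/- Let p be a prime, 1 ≤ k ≤ p−1 with (k+1)(k+2) < p, and A = (a_i)_{i≥0} the sequence over F_p with a_i = binom(i+k, k) mod p. Then the p-th expansion complexity satisfies E_p(A) = k + 2. -/
/-! The generating function of `A` is `G = 1 / u` with `u = (1 - x)^(k+1)`, so `u(x) y - 1`,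
of total degree `k + 2`, annihilates it. Conversely, write `h(x, y) = ∑_b c_b(x) y^b` with total
degree at most `d = deg u = k + 1`. Then `u^d h(x, G) = ∑_b c_b u^(d-b)` is a polynomial of
degree at most `d (d + 1) < p`, so `x^p ∣ h(x, G)` forces it to vanish; as `deg c_b < deg u` for
`b ≥ 1`, this `u`-adic expansion of `0` has all digits `c_b = 0`. -/

theorem Finsupp.single_zero_add_single_one {M : Type*} [AddZeroClass M] (m : Fin 2 →₀ M) :
    single 0 (m 0) + single 1 (m 1) = m := by
  ext i; fin_cases i <;> simp

theorem PowerSeries.one_sub_X_pow_mul_mk_choose (R : Type*) [CommRing R] (k : ℕ) :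
    (1 - X) ^ (k + 1) * mk (fun i => (((i + k).choose k : ℕ) : R)) = 1 := by
  rw [mul_comm]
  convert mk_add_choose_mul_one_sub_pow_eq_one (S := R) (d := k) using 4 with i
  rw [add_comm]

section

open Polynomial

namespace Polynomial

variable {R : Type*}

theorem eq_zero_of_sum_mul_pow_eq_zero [CommRing R] [NoZeroDivisors R] {u : R[X]} (hu : u ≠ 0)
    {n : ℕ} {e : ℕ → R[X]} (hdeg : ∀ j < n, (e j).natDegree < u.natDegree)
    (hsum : ∑ j ∈ Finset.range (n + 1), e j * u ^ j = 0) : ∀ j ≤ n, e j = 0 := by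
  induction n generalizing e with
  | zero =>
    intro j hj
    simpa [Nat.le_zero.mp hj] using hsum
  | succ n ih =>
    set T := ∑ j ∈ Finset.range (n + 1), e (j + 1) * u ^ j
    have hsplit : e 0 + u * T = 0 := by
      rw [← hsum, Finset.sum_range_succ' _ (n + 1), Finset.mul_sum, add_comm, pow_zero, mul_one]
      exact congrArg (· + e 0) (Finset.sum_congr rfl fun j _ => by ring)
    have hT : T = 0 := by
      by_contra hT
      have := hdeg 0 n.succ_pos
      rw [eq_neg_of_add_eq_zero_left hsplit, natDegree_neg, natDegree_mul hu hT] at this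
      omega
    have htail := ih (e := fun j => e (j + 1)) (fun j hj => hdeg (j + 1) (by omega)) hT
    rintro (_ | j) hj
    · rwa [hT, mul_zero, add_zero] at hsplit
    · exact htail j (by omega)

theorem eq_zero_of_X_pow_dvd_coe [Semiring R] {φ : R[X]} {N : ℕ} (hdeg : φ.natDegree < N)
    (hdvd : (PowerSeries.X : PowerSeries R) ^ N ∣ φ) : φ = 0 := by
  ext n
  rw [coeff_zero]
  rcases lt_or_ge n N with hn | hn
  · rw [← coeff_coe]; exact PowerSeries.X_pow_dvd_iff.mp hdvd n hn
  · exact coeff_eq_zero_of_natDegree_lt (by omega)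

theorem aeval_X_eq_coe [CommSemiring R] (φ : R[X]) :
    aeval (PowerSeries.X : PowerSeries R) φ = φ := by
  rw [aeval_def]
  exact eval₂_C_X_eq_coe

end Polynomial

namespace MvPolynomial

section coeffY

variable {F : Type*} [CommSemiring F]

/-- The coefficient of `y ^ b` in `h(x, y)`, where `x = X 0` and `y = X 1`, as a polynomial
in `x`. -/
noncomputable def coeffY (h : MvPolynomial (Fin 2) F) (b : ℕ) : F[X] :=
  ∑ m ∈ h.support with m 1 = b, Polynomial.monomial (m 0) (h.coeff m)

theorem add_le_totalDegree_of_mem_support {h : MvPolynomial (Fin 2) F} {m : Fin 2 →₀ ℕ}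
    (hm : m ∈ h.support) : m 0 + m 1 ≤ h.totalDegree := by
  simpa [Finsupp.sum_fintype, Fin.sum_univ_two] using le_totalDegree hm

theorem coeff_coeffY (h : MvPolynomial (Fin 2) F) (a b : ℕ) :
    (h.coeffY b).coeff a = h.coeff (Finsupp.single 0 a + Finsupp.single 1 b) := by
  rw [coeffY, finsetSum_coeff, Finset.sum_eq_single (Finsupp.single 0 a + Finsupp.single 1 b)]
  · simp
  · intro m hm hne
    rw [Polynomial.coeff_monomial, if_neg]
    rintro rfl
    rw [← (Finset.mem_filter.mp hm).2, Finsupp.single_zero_add_single_one] at hne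
    exact hne rfl
  · intro hnot
    simp_all

theorem natDegree_coeffY_le {h : MvPolynomial (Fin 2) F} {n : ℕ} (hh : h.totalDegree ≤ n)
    (b : ℕ) : (h.coeffY b).natDegree ≤ n - b := by
  refine natDegree_sum_le_of_forall_le _ _ fun m hm => (natDegree_monomial_le _).trans ?_
  have := add_le_totalDegree_of_mem_support (Finset.mem_filter.mp hm).1
  have := (Finset.mem_filter.mp hm).2
  omega

theorem eq_zero_of_coeffY_eq_zero {h : MvPolynomial (Fin 2) F} {n : ℕ} (hh : h.totalDegree ≤ n)
    (hY : ∀ b ≤ n, h.coeffY b = 0) : h = 0 := by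
  ext m
  by_cases hm : m ∈ h.support
  · have := add_le_totalDegree_of_mem_support hm
    rw [coeff_zero, ← Finsupp.single_zero_add_single_one m, ← coeff_coeffY, hY _ (by omega),
      Polynomial.coeff_zero]
  · exact notMem_support_iff.mp hm

theorem aeval_eq_sum_coeffY {A : Type*} [CommSemiring A] [Algebra F A] (x y : A)
    {h : MvPolynomial (Fin 2) F} {n : ℕ} (hh : h.totalDegree ≤ n) :
    aeval ![x, y] h = ∑ b ∈ Finset.range (n + 1), Polynomial.aeval x (h.coeffY b) * y ^ b := by
  have hmaps : ∀ m ∈ h.support, m 1 ∈ Finset.range (n + 1) := fun m hm => by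
    have := add_le_totalDegree_of_mem_support hm
    rw [Finset.mem_range]
    omega
  conv_lhs => rw [h.as_sum, map_sum]
  rw [← Finset.sum_fiberwise_of_maps_to hmaps]
  refine Finset.sum_congr rfl fun b _ => ?_
  rw [coeffY, map_sum, Finset.sum_mul]
  refine Finset.sum_congr rfl fun m hm => ?_
  rw [← (Finset.mem_filter.mp hm).2, aeval_monomial, Polynomial.aeval_monomial,
    Finsupp.prod_fintype _ _ fun _ => pow_zero _, Fin.prod_univ_two]
  simp [mul_assoc]

theorem pow_mul_aeval_eq_aeval_sum_coeffY {A : Type*} [CommSemiring A] [Algebra F A] {x g : A}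
    {u : F[X]} (hug : Polynomial.aeval x u * g = 1) {h : MvPolynomial (Fin 2) F} {n : ℕ}
    (hh : h.totalDegree ≤ n) :
    Polynomial.aeval x u ^ n * aeval ![x, g] h =
      Polynomial.aeval x (∑ j ∈ Finset.range (n + 1), h.coeffY (n - j) * u ^ j) := by
  rw [aeval_eq_sum_coeffY x g hh, ← Finset.sum_range_reflect, Finset.mul_sum, map_sum]
  refine Finset.sum_congr rfl fun j hj => ?_
  have hjn : j ≤ n := Nat.lt_succ_iff.mp (Finset.mem_range.mp hj)
  rw [add_tsub_cancel_right, map_mul, map_pow, ← pow_mul_pow_sub _ hjn]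
  calc Polynomial.aeval x u ^ j * Polynomial.aeval x u ^ (n - j) *
        (Polynomial.aeval x (h.coeffY (n - j)) * g ^ (n - j))
      = Polynomial.aeval x (h.coeffY (n - j)) * Polynomial.aeval x u ^ j *
          (Polynomial.aeval x u * g) ^ (n - j) := by ring
    _ = _ := by rw [hug, one_pow, mul_one]

end coeffY

theorem eq_zero_of_X_pow_dvd_aeval {F : Type*} [Field F] {u : F[X]} {G : PowerSeries F}
    (huG : (u : PowerSeries F) * G = 1) {N : ℕ} (hN : u.natDegree * (u.natDegree + 1) < N)
    {h : MvPolynomial (Fin 2) F} (hh : h.totalDegree ≤ u.natDegree)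
    (hdvd : PowerSeries.X ^ N ∣ aeval ![PowerSeries.X, G] h) : h = 0 := by
  set d := u.natDegree
  have hu : u ≠ 0 := by rintro rfl; simp at huG
  set P := ∑ j ∈ Finset.range (d + 1), h.coeffY (d - j) * u ^ j
  have hP : (u : PowerSeries F) ^ d * aeval ![PowerSeries.X, G] h = P := by
    have key := pow_mul_aeval_eq_aeval_sum_coeffY (x := PowerSeries.X)
      (by rwa [Polynomial.aeval_X_eq_coe]) hh
    rwa [Polynomial.aeval_X_eq_coe, Polynomial.aeval_X_eq_coe] at key
  have hPdeg : P.natDegree ≤ d * (d + 1) := by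
    refine natDegree_sum_le_of_forall_le _ _ fun j hj => natDegree_mul_le.trans ?_
    have hc := natDegree_coeffY_le hh (d - j)
    have hpow : (u ^ j).natDegree ≤ j * d := natDegree_pow_le
    have hjd : j * d ≤ d * d :=
      Nat.mul_le_mul_right d (Nat.lt_succ_iff.mp (Finset.mem_range.mp hj))
    rw [Nat.mul_succ]
    omega
  have hP0 : P = 0 :=
    Polynomial.eq_zero_of_X_pow_dvd_coe (by omega) (hP ▸ dvd_mul_of_dvd_right hdvd _)
  refine eq_zero_of_coeffY_eq_zero hh fun b hb => ?_
  have hdigit := Polynomial.eq_zero_of_sum_mul_pow_eq_zero hu (e := fun j => h.coeffY (d - j))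
    (fun j hj => (natDegree_coeffY_le hh (d - j)).trans_lt (by omega)) hP0 (d - b) (by omega)
  rwa [Nat.sub_sub_self hb] at hdigit

theorem totalDegree_aeval_X_le {σ R : Type*} [CommSemiring R] (u : R[X]) (i : σ) :
    (Polynomial.aeval (X i : MvPolynomial σ R) u).totalDegree ≤ u.natDegree := by
  rw [Polynomial.aeval_eq_sum_range]
  refine (totalDegree_finsetSum _ _).trans
    (Finset.sup_le fun n hn => (totalDegree_smul_le _ _).trans ?_)
  rw [X_pow_eq_monomial]
  refine (totalDegree_monomial_le _ _).trans ?_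
  rw [Finsupp.sum_single_index rfl]
  exact Nat.lt_succ_iff.mp (Finset.mem_range.mp hn)

section aeval_X_mul_X_sub_one

variable {R : Type*} [CommRing R]

theorem totalDegree_aeval_X_mul_X_sub_one_le (u : R[X]) :
    (Polynomial.aeval (X 0) u * X 1 - 1 : MvPolynomial (Fin 2) R).totalDegree ≤
      u.natDegree + 1 := by
  rw [← C_1]
  refine (totalDegree_sub_C_le _ _).trans ((totalDegree_mul _ _).trans ?_)
  refine add_le_add (totalDegree_aeval_X_le u 0)
    ((totalDegree_monomial_le (Finsupp.single 1 1) 1).trans ?_)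
  rw [Finsupp.sum_single_index rfl, id]

theorem aeval_aeval_X_mul_X_sub_one {A : Type*} [CommRing A] [Algebra R A] {u : R[X]} {x g : A}
    (hug : Polynomial.aeval x u * g = 1) :
    aeval ![x, g] (Polynomial.aeval (X 0) u * X 1 - 1 : MvPolynomial (Fin 2) R) = 0 := by
  rw [map_sub, map_mul, ← Polynomial.aeval_algHom_apply]
  simp [hug]

theorem aeval_X_mul_X_sub_one_ne_zero [Nontrivial R] (u : R[X]) :
    (Polynomial.aeval (X 0) u * X 1 - 1 : MvPolynomial (Fin 2) R) ≠ 0 := by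
  intro h
  simpa using congr_arg (eval 0) h

end aeval_X_mul_X_sub_one

end MvPolynomial

end

theorem expComplexityN_eq {F : Type*} [Field F] {s : ℕ → F} {N d : ℕ}
    (hs : ∃ i < N, s i ≠ 0)
    (hd : ∃ h : MvPolynomial (Fin 2) F, h ≠ 0 ∧ h.totalDegree = d ∧
      PowerSeries.X ^ N ∣ MvPolynomial.aeval ![PowerSeries.X, PowerSeries.mk s] h)
    (hle : ∀ h : MvPolynomial (Fin 2) F, h ≠ 0 →
      PowerSeries.X ^ N ∣ MvPolynomial.aeval ![PowerSeries.X, PowerSeries.mk s] h →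
        d ≤ h.totalDegree) :
    expComplexityN s N = d := by
  rw [expComplexityN, if_neg (by simpa using hs)]
  exact le_antisymm (Nat.sInf_le hd)
    (le_csInf ⟨d, hd⟩ fun e ⟨h, hne, he, hdvd⟩ => he ▸ hle h hne hdvd)

theorem expComplexityN_binomial_sequence_small_k_general (p k : ℕ) [Fact p.Prime]
    (hkp : (k + 1) * (k + 2) < p) :
    expComplexityN (fun i => (((i + k).choose k : ℕ) : ZMod p)) p = k + 2 := by
  set G := PowerSeries.mk fun i => (((i + k).choose k : ℕ) : ZMod p)
  set u : Polynomial (ZMod p) := (1 - Polynomial.X) ^ (k + 1)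
  have hu : u.natDegree = k + 1 := by
    rw [Polynomial.natDegree_pow, Polynomial.natDegree_sub_eq_right_of_natDegree_lt] <;> simp
  have huG : (u : PowerSeries (ZMod p)) * G = 1 := by
    simpa [u] using PowerSeries.one_sub_X_pow_mul_mk_choose (ZMod p) k
  have hlow : ∀ h : MvPolynomial (Fin 2) (ZMod p), h ≠ 0 →
      PowerSeries.X ^ p ∣ MvPolynomial.aeval ![PowerSeries.X, G] h →
        k + 2 ≤ h.totalDegree := by
    intro h hne hdvd
    by_contra! hlt
    exact hne (MvPolynomial.eq_zero_of_X_pow_dvd_aeval huG (by rwa [hu]) (by omega) hdvd)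
  set h₀ : MvPolynomial (Fin 2) (ZMod p) :=
    Polynomial.aeval (MvPolynomial.X 0) u * MvPolynomial.X 1 - 1
  have h₀_ne : h₀ ≠ 0 := MvPolynomial.aeval_X_mul_X_sub_one_ne_zero u
  have h₀_dvd : PowerSeries.X ^ p ∣ MvPolynomial.aeval ![PowerSeries.X, G] h₀ := by
    rw [MvPolynomial.aeval_aeval_X_mul_X_sub_one (by rwa [Polynomial.aeval_X_eq_coe])]
    exact dvd_zero _
  have h₀_deg : h₀.totalDegree ≤ k + 2 := by
    simpa only [hu] using MvPolynomial.totalDegree_aeval_X_mul_X_sub_one_le u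
  exact expComplexityN_eq ⟨0, (Fact.out : p.Prime).pos, by simp⟩
    ⟨h₀, h₀_ne, h₀_deg.antisymm (hlow h₀ h₀_ne h₀_dvd), h₀_dvd⟩ hlow

theorem expComplexityN_binomial_sequence_small_k (p k : ℕ) [Fact p.Prime]
    (hk1 : 1 ≤ k) (hk2 : k ≤ p - 1) (hkp : (k + 1) * (k + 2) < p) :
    expComplexityN (fun i => (((i + k).choose k : ℕ) : ZMod p)) p = k + 2 :=
  expComplexityN_binomial_sequence_small_k_general p k hkp
end

section
/- Let S be a sequence over F_q with generating function G(x), let N ≥ 2 with G(x) ≢ 0 mod x^N, and let Σ_{ℓ=t_N}^{L_N} c_ℓ s_{i+ℓ} = 0 (0 ≤ i ≤ N−L_N−1) be a shortest linear recurrence for the first N terms, with c_{L_N} = 1 and c_{t_N} ≠ 0. Then E_N(S) ≤ L_N(S) + max{−1, −t_N + 1}; in particular E_N(S) ≤ L_N(S) + 1. -/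
/-!
If `A(x) = ∑ c_ℓ x^(L-ℓ)` is the reciprocal of the characteristic polynomial of the recurrence,
then the recurrence says precisely that the coefficients of `A(x) G(x)` in degrees `L, …, N-1`
vanish. So with `B(x)` the truncation of `A(x) G(x)` below degree `L`, the polynomial
`h(x, y) = A(x) y - B(x)` satisfies `h(x, G(x)) ≡ 0 mod x^N`. It is nonzero because
`A(0) = c_L = 1`, and its total degree is at most `max (deg A + 1) (deg B) ≤ max (L - t + 1) (L - 1)`.
-/

open Polynomial

section CommSemiring

variable {R : Type*} [CommSemiring R]

noncomputable def connectionPoly (c : ℕ → R) (L : ℕ) : R[X] :=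
  ∑ ℓ ∈ Finset.range (L + 1), C (c ℓ) * X ^ (L - ℓ)

theorem coeff_connectionPoly_zero (c : ℕ → R) (L : ℕ) : (connectionPoly c L).coeff 0 = c L := by
  rw [connectionPoly, Finset.sum_range_succ, Nat.sub_self, pow_zero, mul_one, coeff_add,
    coeff_C_zero, finsetSum_coeff, Finset.sum_eq_zero fun ℓ hℓ => ?_, zero_add]
  rw [coeff_C_mul_X_pow, if_neg (by have := Finset.mem_range.mp hℓ; omega)]

theorem natDegree_connectionPoly_le {c : ℕ → R} {t : ℕ} (hc : ∀ ℓ < t, c ℓ = 0) (L : ℕ) :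
    (connectionPoly c L).natDegree ≤ L - t := by
  refine natDegree_sum_le_of_forall_le _ _ fun ℓ _ => ?_
  by_cases hℓ : ℓ < t
  · simp [hc ℓ hℓ]
  · exact (natDegree_C_mul_X_pow_le _ _).trans (by omega)

theorem coeff_connectionPoly_mul_mk (c s : ℕ → R) (L i : ℕ) :
    PowerSeries.coeff (i + L) ((connectionPoly c L : PowerSeries R) * PowerSeries.mk s) =
      ∑ ℓ ∈ Finset.range (L + 1), c ℓ * s (i + ℓ) := by
  rw [← coeToPowerSeries.ringHom_apply, connectionPoly, map_sum, Finset.sum_mul, map_sum]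
  refine Finset.sum_congr rfl fun ℓ hℓ => ?_
  have hℓL : ℓ ≤ L := Finset.mem_range_succ_iff.mp hℓ
  rw [coeToPowerSeries.ringHom_apply, coe_mul, coe_C, coe_pow, coe_X, mul_assoc,
    PowerSeries.coeff_C_mul, PowerSeries.coeff_X_pow_mul', if_pos (by omega),
    PowerSeries.coeff_mk, show i + L - (L - ℓ) = i + ℓ by omega]

theorem natDegree_trunc_le_pred (φ : PowerSeries R) (n : ℕ) :
    (PowerSeries.trunc n φ).natDegree ≤ n - 1 := by
  cases n with
  | zero => simp
  | succ n => exact Nat.le_pred_of_lt (PowerSeries.natDegree_trunc_lt φ n)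

theorem aeval_X_powerSeries_eq_coe (p : R[X]) :
    aeval (PowerSeries.X : PowerSeries R) p = p := by
  rw [aeval_def, ← eval₂_C_X_eq_coe]
  rfl

theorem totalDegree_toMvPolynomial_le {σ : Type*} (p : R[X]) (i : σ) :
    (p.toMvPolynomial i).totalDegree ≤ p.natDegree := by
  conv_lhs => rw [p.as_sum_range_C_mul_X_pow, map_sum]
  refine MvPolynomial.totalDegree_finsetSum_le fun n hn => ?_
  rw [map_mul, map_pow, toMvPolynomial_C, toMvPolynomial_X, MvPolynomial.C_mul_X_pow_eq_monomial]
  exact (MvPolynomial.totalDegree_monomial_le _ _).trans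
    (by simpa using Finset.mem_range_succ_iff.mp hn)

end CommSemiring

section CommRing

variable {R : Type*} [CommRing R]

theorem X_pow_dvd_sub_trunc {φ : PowerSeries R} {L N : ℕ}
    (hφ : ∀ m, L ≤ m → m < N → PowerSeries.coeff m φ = 0) :
    PowerSeries.X ^ N ∣ φ - (PowerSeries.trunc L φ : PowerSeries R) := by
  refine PowerSeries.X_pow_dvd_iff.mpr fun m hm => ?_
  rw [map_sub, coeff_coe, PowerSeries.coeff_trunc]
  split_ifs with hmL
  · exact sub_self _
  · rw [sub_zero, hφ m (not_lt.mp hmL) hm]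

noncomputable def linearBivariate (a b : R[X]) : MvPolynomial (Fin 2) R :=
  a.toMvPolynomial 0 * MvPolynomial.X 1 - b.toMvPolynomial 0

theorem aeval_linearBivariate {S : Type*} [CommRing S] [Algebra R S] (a b : R[X]) (x y : S) :
    MvPolynomial.aeval ![x, y] (linearBivariate a b) = aeval x a * y - aeval x b := by
  simp [linearBivariate, MvPolynomial.aeval_toMvPolynomial]

theorem totalDegree_linearBivariate_le (a b : R[X]) :
    (linearBivariate a b).totalDegree ≤ max (a.natDegree + 1) b.natDegree := by
  refine (MvPolynomial.totalDegree_sub _ _).trans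
    (max_le_max ?_ (totalDegree_toMvPolynomial_le b 0))
  exact (MvPolynomial.totalDegree_mul _ _).trans (add_le_add (totalDegree_toMvPolynomial_le a 0)
    ((MvPolynomial.totalDegree_monomial_le _ _).trans (by simp)))

theorem linearBivariate_ne_zero {a : R[X]} (ha : a ≠ 0) (b : R[X]) :
    linearBivariate a b ≠ 0 := by
  intro h
  -- read `a(x) y - b(x)` as the polynomial `C a * Y - C b` over `R[x]`; its `Y`-coefficient is `a`
  have hC : ∀ p : R[X], aeval (C X : R[X][X]) p = C p := fun p => by
    simpa using aeval_algHom_apply (CAlgHom : R[X] →ₐ[R] R[X][X]) X p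
  have := congrArg (fun p => (MvPolynomial.aeval ![C X, X] p : R[X][X]).coeff 1) h
  simp [aeval_linearBivariate, hC] at this
  exact ha this

end CommRing

theorem expComplexityN_le_totalDegree {F : Type*} [Field F] {s : ℕ → F} {N : ℕ}
    {h : MvPolynomial (Fin 2) F} (hh : h ≠ 0)
    (hdvd : (PowerSeries.X : PowerSeries F) ^ N ∣
      MvPolynomial.aeval ![(PowerSeries.X : PowerSeries F), PowerSeries.mk s] h) :
    expComplexityN s N ≤ h.totalDegree := by
  unfold expComplexityN
  split_ifs
  · exact Nat.zero_le _
  · exact Nat.sInf_le ⟨h, hh, rfl, hdvd⟩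

theorem expComplexityN_upper_bound_aperiodic_general {F : Type*} [Field F]
    (s : ℕ → F) (N : ℕ)
    (L t : ℕ) (htL : t ≤ L)
    (c : ℕ → F) (hcL : c L = 1) (hct' : ∀ ℓ < t, c ℓ = 0)
    (hrec : ∀ i, i + L < N → ∑ ℓ ∈ Finset.range (L + 1), c ℓ * s (i + ℓ) = 0) :
    expComplexityN s N ≤ L + 1 - min 2 t ∧ expComplexityN s N ≤ L + 1 := by
  set A := connectionPoly c L
  set B := PowerSeries.trunc L ((A : PowerSeries F) * PowerSeries.mk s)
  have hdvd : (PowerSeries.X : PowerSeries F) ^ N ∣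
      MvPolynomial.aeval ![(PowerSeries.X : PowerSeries F), PowerSeries.mk s]
        (linearBivariate A B) := by
    rw [aeval_linearBivariate, aeval_X_powerSeries_eq_coe, aeval_X_powerSeries_eq_coe]
    refine X_pow_dvd_sub_trunc fun m hLm hmN => ?_
    obtain ⟨i, rfl⟩ := Nat.exists_eq_add_of_le' hLm
    rw [coeff_connectionPoly_mul_mk]
    exact hrec i hmN
  have hA0 : A.coeff 0 = 1 := (coeff_connectionPoly_zero c L).trans hcL
  have hA : A ≠ 0 := fun h => by simp [h] at hA0
  have hE := expComplexityN_le_totalDegree (linearBivariate_ne_zero hA B) hdvd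
  have hdeg := totalDegree_linearBivariate_le A B
  have hdegA : A.natDegree ≤ L - t := natDegree_connectionPoly_le hct' L
  have hdegB : B.natDegree ≤ L - 1 := natDegree_trunc_le_pred _ L
  omega

theorem expComplexityN_upper_bound_aperiodic {F : Type*} [Field F] [Fintype F]
    (s : ℕ → F) (N : ℕ) (hN : 2 ≤ N)
    (hG : ¬ (PowerSeries.X : PowerSeries F) ^ N ∣ PowerSeries.mk s)
    (L t : ℕ) (hL : linComplexityN s N = L) (htL : t ≤ L)
    (c : ℕ → F) (hcL : c L = 1) (hct : c t ≠ 0) (hct' : ∀ ℓ < t, c ℓ = 0)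
    (hrec : ∀ i, i + L < N → ∑ ℓ ∈ Finset.range (L + 1), c ℓ * s (i + ℓ) = 0)
    (hmin : ∀ L' < L, ¬ ∃ c' : Fin L' → F, ∀ i, i + L' < N →
      s (i + L') + ∑ ℓ : Fin L', c' ℓ * s (i + ℓ.1) = 0) :
    expComplexityN s N ≤ L + 1 - min 2 t ∧ expComplexityN s N ≤ L + 1 :=
  expComplexityN_upper_bound_aperiodic_general s N L t htL c hcL hct' hrec
end

section
/- Let S be a sequence over F_q with generating function G(x), let N ≥ 2 with G(x) ≢ 0 mod x^N, and let t_N and L_N be as in the shortest linear recurrence for the first N terms. Then E_N(S) ≥ L_N − t_N + 1 if N > (L_N − t_N)(L_N − min{1, t_N − 1}), and E_N(S) ≥ ⌈N / (L_N − min{1, t_N − 1})⌉ otherwise. -/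
namespace LinearRecurrence

open Polynomial Finset

variable {F : Type*} [Field F]

noncomputable def connectionPoly (c : ℕ → F) (L : ℕ) : F[X] :=
  ∑ k ∈ range (L + 1), C (c (L - k)) * X ^ k

lemma coeff_connectionPoly (c : ℕ → F) (L k : ℕ) :
    (connectionPoly c L).coeff k = if k ≤ L then c (L - k) else 0 := by
  simp [connectionPoly, coeff_C_mul, coeff_X_pow]

lemma natDegree_connectionPoly_le (c : ℕ → F) (L : ℕ) : (connectionPoly c L).natDegree ≤ L :=
  natDegree_le_iff_coeff_eq_zero.2 fun k hk => by
    rw [coeff_connectionPoly, if_neg hk.not_ge]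

lemma natDegree_connectionPoly {c : ℕ → F} {L t : ℕ} (htL : t ≤ L) (hct : c t ≠ 0)
    (hct' : ∀ ℓ < t, c ℓ = 0) : (connectionPoly c L).natDegree = L - t := by
  refine le_antisymm (natDegree_le_iff_coeff_eq_zero.2 fun k hk => ?_)
    (le_natDegree_of_ne_zero ?_)
  · rw [coeff_connectionPoly]
    split_ifs
    · exact hct' _ (by omega)
    · rfl
  · rwa [coeff_connectionPoly, if_pos (by omega), Nat.sub_sub_self htL]

lemma isUnit_connectionPoly {c : ℕ → F} {L : ℕ} (hcL : c L ≠ 0) :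
    IsUnit (connectionPoly c L : PowerSeries F) := by
  rw [PowerSeries.isUnit_iff_constantCoeff, constantCoeff_coe, coeff_connectionPoly]
  simpa using hcL

def HasRecurrence (s : ℕ → F) (N L : ℕ) : Prop :=
  ∃ c : Fin L → F, ∀ i, i + L < N → s (i + L) + ∑ ℓ : Fin L, c ℓ * s (i + ℓ.1) = 0

lemma coeff_coe_mul_mk (s : ℕ → F) {b : F[X]} {M m : ℕ} (hb : b.natDegree ≤ M) (hm : M ≤ m) :
    PowerSeries.coeff m ((b : PowerSeries F) * PowerSeries.mk s)
      = ∑ ℓ ∈ range (M + 1), b.coeff (M - ℓ) * s (m - M + ℓ) := by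
  rw [PowerSeries.coeff_mul, Nat.sum_antidiagonal_eq_sum_range_succ_mk]
  simp only [coeff_coe, PowerSeries.coeff_mk]
  rw [← sum_subset (range_subset_range.2 (by omega : M + 1 ≤ m + 1)), ← sum_range_reflect]
  · refine sum_congr rfl fun ℓ hℓ => ?_
    rw [mem_range] at hℓ
    rw [show M + 1 - 1 - ℓ = M - ℓ by omega, show m - (M - ℓ) = m - M + ℓ by omega]
  · intro k _ hk
    rw [mem_range] at hk
    rw [coeff_eq_zero_of_natDegree_lt (by omega), zero_mul]

variable {s : ℕ → F} {N : ℕ}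

lemma hasRecurrence_of_X_pow_dvd {b v : F[X]} {M : ℕ} (hb0 : b.coeff 0 ≠ 0)
    (hb : b.natDegree ≤ M) (hv : v.natDegree < M)
    (hdvd : (PowerSeries.X : PowerSeries F) ^ N ∣ (b : PowerSeries F) * PowerSeries.mk s - v) :
    HasRecurrence s N M := by
  refine ⟨fun ℓ => b.coeff (M - ℓ.1) / b.coeff 0, fun i hi => ?_⟩
  have hcoeff := PowerSeries.X_pow_dvd_iff.1 hdvd (i + M) hi
  rw [map_sub, coeff_coe, coeff_eq_zero_of_natDegree_lt (by omega), sub_zero,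
    coeff_coe_mul_mk s hb (by omega), sum_range_succ, Nat.sub_self,
    Nat.add_sub_cancel] at hcoeff
  rw [Fin.sum_univ_eq_sum_range (fun ℓ => b.coeff (M - ℓ) / b.coeff 0 * s (i + ℓ)),
    ← mul_right_inj' hb0, mul_zero, ← hcoeff, mul_add, mul_sum, add_comm]
  congr 1
  exact sum_congr rfl fun ℓ _ => by field_simp

lemma exists_X_pow_dvd_connectionPoly_mul_sub {c : ℕ → F} {L : ℕ}
    (hG : ¬ (PowerSeries.X : PowerSeries F) ^ N ∣ PowerSeries.mk s) (hcL : c L = 1)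
    (hrec : ∀ i, i + L < N → ∑ ℓ ∈ range (L + 1), c ℓ * s (i + ℓ) = 0) :
    ∃ u : F[X], u ≠ 0 ∧ u.natDegree < L ∧ (PowerSeries.X : PowerSeries F) ^ N ∣
      (connectionPoly c L : PowerSeries F) * PowerSeries.mk s - u := by
  set φ := (connectionPoly c L : PowerSeries F) * PowerSeries.mk s
  have hdvd : (PowerSeries.X : PowerSeries F) ^ N ∣ φ - PowerSeries.trunc L φ := by
    refine PowerSeries.X_pow_dvd_iff.2 fun m hm => ?_
    rw [map_sub, coeff_coe, PowerSeries.coeff_trunc]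
    split_ifs with hmL
    · exact sub_self _
    · rw [sub_zero, coeff_coe_mul_mk s (natDegree_connectionPoly_le c L) (by omega),
        ← hrec (m - L) (by omega)]
      refine sum_congr rfl fun ℓ hℓ => ?_
      rw [mem_range] at hℓ
      rw [coeff_connectionPoly, if_pos (by omega), Nat.sub_sub_self (by omega)]
  have hu0 : PowerSeries.trunc L φ ≠ 0 := fun h0 => hG <|
    ((isUnit_connectionPoly (hcL ▸ one_ne_zero)).dvd_mul_left).1 (by simpa [h0] using hdvd)
  refine ⟨_, hu0, ?_, hdvd⟩
  rw [natDegree_lt_iff_degree_lt hu0]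
  exact PowerSeries.degree_trunc_lt φ L

lemma isCoprime_of_X_pow_dvd_mul_sub {b u : F[X]} {L : ℕ} (hmin : ∀ M < L, ¬ HasRecurrence s N M)
    (hb0 : b.coeff 0 ≠ 0) (hb : b.natDegree ≤ L) (hu0 : u ≠ 0) (hu : u.natDegree < L)
    (hdvd : (PowerSeries.X : PowerSeries F) ^ N ∣ (b : PowerSeries F) * PowerSeries.mk s - u) :
    IsCoprime b u := by
  refine isCoprime_of_irreducible_dvd (fun h => hu0 h.2) ?_
  rintro p hp ⟨b', rfl⟩ ⟨v, rfl⟩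
  rw [mul_coeff_zero] at hb0
  have hp0 : p.coeff 0 ≠ 0 := left_ne_zero_of_mul hb0
  have hpunit : IsUnit (p : PowerSeries F) := by
    rw [PowerSeries.isUnit_iff_constantCoeff, constantCoeff_coe]
    exact hp0.isUnit
  have hdeg := hp.natDegree_pos
  rw [natDegree_mul (left_ne_zero_of_mul hu0) (right_ne_zero_of_mul hu0)] at hu
  rw [natDegree_mul hp.ne_zero (fun h => hb0 (by simp [h]))] at hb
  refine hmin (L - 1) (by omega) (hasRecurrence_of_X_pow_dvd (b := b') (v := v)
    (right_ne_zero_of_mul hb0) (by omega) (by omega) (hpunit.dvd_mul_left.1 ?_))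
  rw [mul_sub, ← mul_assoc]
  push_cast at hdvd
  exact hdvd

noncomputable def polyInY (h : MvPolynomial (Fin 2) F) : F[X][X] :=
  MvPolynomial.aeval ![C X, X] h

lemma coeff_coeff_polyInY (h : MvPolynomial (Fin 2) F) (i j : ℕ) :
    ((polyInY h).coeff j).coeff i = h.coeff (Finsupp.single 0 i + Finsupp.single 1 j) := by
  induction h using MvPolynomial.induction_on' with
  | monomial m a =>
    rw [polyInY, MvPolynomial.aeval_monomial, Finsupp.prod_fintype _ _ (by simp),
      Fin.prod_univ_two]
    simp only [Matrix.cons_val_zero, Matrix.cons_val_one, ← C_pow, Polynomial.algebraMap_apply,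
      algebraMap_eq, ← mul_assoc, ← C_mul, coeff_C_mul_X_pow, MvPolynomial.coeff_monomial]
    have hm : m = Finsupp.single 0 i + Finsupp.single 1 j ↔ m 0 = i ∧ m 1 = j := by
      refine ⟨by rintro rfl; simp, fun ⟨hi, hj⟩ => ?_⟩
      ext k; fin_cases k <;> simp [hi, hj]
    by_cases hj : m 1 = j
    · simp [hm, hj, eq_comm]
    · simp [hm, hj, Ne.symm hj]
  | add p q hp hq =>
    simp only [polyInY, map_add, coeff_add, MvPolynomial.coeff_add] at hp hq ⊢
    rw [hp, hq]

lemma natDegree_coeff_polyInY_add_le {h : MvPolynomial (Fin 2) F} {j : ℕ}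
    (hj : (polyInY h).coeff j ≠ 0) : ((polyInY h).coeff j).natDegree + j ≤ h.totalDegree := by
  have hmem := MvPolynomial.mem_support_iff.2 <| (coeff_coeff_polyInY h _ j).symm.trans_ne
    (leadingCoeff_ne_zero.2 hj)
  simpa [Finsupp.sum_add_index] using MvPolynomial.le_totalDegree hmem

lemma polyInY_ne_zero {h : MvPolynomial (Fin 2) F} (hh : h ≠ 0) : polyInY h ≠ 0 := by
  obtain ⟨m, hm⟩ := MvPolynomial.ne_zero_iff.1 hh
  intro h0
  apply hm
  have hm2 : m = Finsupp.single 0 (m 0) + Finsupp.single 1 (m 1) := by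
    ext k; fin_cases k <;> simp
  rw [hm2, ← coeff_coeff_polyInY, h0, coeff_zero, coeff_zero]

lemma aeval_X_mk_eq_eval₂_polyInY (h : MvPolynomial (Fin 2) F) (s : ℕ → F) :
    MvPolynomial.aeval ![(PowerSeries.X : PowerSeries F), PowerSeries.mk s] h
      = (polyInY h).eval₂ coeToPowerSeries.ringHom (PowerSeries.mk s) := by
  change (MvPolynomial.aeval _).toRingHom h = ((eval₂RingHom coeToPowerSeries.ringHom
    (PowerSeries.mk s)).comp (MvPolynomial.aeval ![C X, X] : _ →ₐ[F] F[X][X]).toRingHom) h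
  congr 1
  refine MvPolynomial.ringHom_ext (fun a => ?_) (fun i => ?_)
  · simp
  · fin_cases i <;> simp

-- `(Q.scaleRoots b).eval u = Σ_j Q_j u^j b^(deg Q - j)`, i.e. `b^(deg Q) Q(u / b)`.
lemma X_pow_dvd_coe_eval_scaleRoots {Q : F[X][X]} {b u : F[X]} {G : PowerSeries F}
    (hQ : (PowerSeries.X : PowerSeries F) ^ N ∣ Q.eval₂ coeToPowerSeries.ringHom G)
    (hbu : (PowerSeries.X : PowerSeries F) ^ N ∣ (b : PowerSeries F) * G - u) :
    (PowerSeries.X : PowerSeries F) ^ N ∣ (((Q.scaleRoots b).eval u : F[X]) : PowerSeries F) := by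
  set φ := coeToPowerSeries.ringHom (R := F)
  have hsub := (hbu.trans (sub_dvd_eval_sub _ _ ((Q.scaleRoots b).map φ)))
  rw [eval_map, eval_map, ← coeToPowerSeries.ringHom_apply (φ := b),
    ← coeToPowerSeries.ringHom_apply (φ := u), scaleRoots_eval₂_mul, eval₂_at_apply] at hsub
  simpa [φ] using dvd_sub (hQ.mul_left (φ b ^ Q.natDegree)) hsub

lemma natDegree_eval_scaleRoots_le {Q : F[X][X]} {b u : F[X]} {d e f : ℕ}
    (hQ : ∀ j, Q.coeff j ≠ 0 → (Q.coeff j).natDegree + j ≤ d)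
    (hb : b.natDegree ≤ e) (hu : u.natDegree ≤ f) :
    ((Q.scaleRoots b).eval u).natDegree ≤ d * max (e + 1) f := by
  rw [eval_eq_sum_range, natDegree_scaleRoots]
  refine natDegree_sum_le_of_forall_le _ _ fun j hj => ?_
  rw [mem_range, Nat.lt_succ_iff] at hj
  rw [coeff_scaleRoots]
  by_cases hq : Q.coeff j = 0
  · simp [hq]
  have hjd := hQ j hq
  have hnd : Q.natDegree ≤ d := by
    have := hQ _ (leadingCoeff_ne_zero.2 (fun h => hq (by simp [h])))
    omega
  calc (Q.coeff j * b ^ (Q.natDegree - j) * u ^ j).natDegree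
      ≤ (Q.coeff j).natDegree + (Q.natDegree - j) * e + j * f := by
        refine natDegree_mul_le.trans (add_le_add (natDegree_mul_le.trans (add_le_add le_rfl
          (natDegree_pow_le.trans ?_))) (natDegree_pow_le.trans ?_)) <;> gcongr
    _ ≤ (d - j) * (e + 1) + j * f := by
        have : (Q.natDegree - j) * e ≤ (d - j) * e := by gcongr
        rw [mul_add_one]
        omega
    _ ≤ (d - j) * max (e + 1) f + j * max (e + 1) f := by gcongr <;> omega
    _ = d * max (e + 1) f := by rw [← add_mul, Nat.sub_add_cancel (by omega)]

lemma natDegree_lt_of_eval_scaleRoots_eq_zero {Q : F[X][X]} {b u : F[X]} {d : ℕ} (hQ0 : Q ≠ 0)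
    (hQ : ∀ j, Q.coeff j ≠ 0 → (Q.coeff j).natDegree + j ≤ d) (hbu : IsCoprime b u)
    (h0 : (Q.scaleRoots b).eval u = 0) : b.natDegree < d := by
  have hlead : Q.leadingCoeff.natDegree + Q.natDegree ≤ d := hQ _ (leadingCoeff_ne_zero.2 hQ0)
  have hn : Q.natDegree ≠ 0 := by
    intro hn
    rw [eq_C_of_natDegree_eq_zero hn, scaleRoots_C, eval_C] at h0
    exact leadingCoeff_ne_zero.2 hQ0 (by rwa [leadingCoeff, hn])
  have hdvd : b ∣ Q.leadingCoeff * u ^ Q.natDegree := by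
    rw [← coeff_scaleRoots_natDegree]
    refine dvd_term_of_isRoot_of_dvd_terms _ h0 fun j hj => ?_
    rw [coeff_scaleRoots]
    rcases lt_or_gt_of_ne hj with hj | hj
    · exact (dvd_pow_self b (by omega)).mul_left _ |>.mul_right _
    · simp [coeff_eq_zero_of_natDegree_lt hj]
  have := natDegree_le_of_dvd (hbu.pow_right.dvd_of_dvd_mul_right hdvd) (leadingCoeff_ne_zero.2 hQ0)
  omega

lemma le_natDegree_of_X_pow_dvd_coe {P : F[X]} (hP : P ≠ 0)
    (hdvd : (PowerSeries.X : PowerSeries F) ^ N ∣ (P : PowerSeries F)) : N ≤ P.natDegree := by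
  have : (X : F[X]) ^ N ∣ P := X_pow_dvd_iff.2 fun m hm => by
    simpa using PowerSeries.X_pow_dvd_iff.1 hdvd m hm
  simpa using natDegree_le_of_dvd this hP

lemma le_totalDegree_or_le_totalDegree_mul {c : ℕ → F} {L t : ℕ}
    (hG : ¬ (PowerSeries.X : PowerSeries F) ^ N ∣ PowerSeries.mk s) (htL : t ≤ L)
    (hcL : c L = 1) (hct : c t ≠ 0) (hct' : ∀ ℓ < t, c ℓ = 0)
    (hrec : ∀ i, i + L < N → ∑ ℓ ∈ range (L + 1), c ℓ * s (i + ℓ) = 0)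
    (hmin : ∀ M < L, ¬ HasRecurrence s N M) {h : MvPolynomial (Fin 2) F} (hh : h ≠ 0)
    (hdvd : (PowerSeries.X : PowerSeries F) ^ N ∣
      MvPolynomial.aeval ![(PowerSeries.X : PowerSeries F), PowerSeries.mk s] h) :
    L - t + 1 ≤ h.totalDegree ∨ N ≤ h.totalDegree * (L + 1 - min 2 t) := by
  obtain ⟨u, hu0, hu, hbu⟩ := exists_X_pow_dvd_connectionPoly_mul_sub hG hcL hrec
  have hb0 : (connectionPoly c L).coeff 0 ≠ 0 := by simp [coeff_connectionPoly, hcL]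
  have hcop := isCoprime_of_X_pow_dvd_mul_sub hmin hb0 (natDegree_connectionPoly_le c L) hu0 hu hbu
  have hb := natDegree_connectionPoly htL hct hct'
  have hQ (j : ℕ) := natDegree_coeff_polyInY_add_le (h := h) (j := j)
  by_cases hP : ((polyInY h).scaleRoots (connectionPoly c L)).eval u = 0
  · have := natDegree_lt_of_eval_scaleRoots_eq_zero (polyInY_ne_zero hh) hQ hcop hP
    omega
  · right
    have hPN := le_natDegree_of_X_pow_dvd_coe hP <| X_pow_dvd_coe_eval_scaleRoots
      (aeval_X_mk_eq_eval₂_polyInY h s ▸ hdvd) hbu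
    have hPd := natDegree_eval_scaleRoots_le hQ hb.le (Nat.le_sub_one_of_lt hu)
    rw [show max (L - t + 1) (L - 1) = L + 1 - min 2 t by omega] at hPd
    exact hPN.trans hPd

lemma exists_totalDegree_eq_expComplexityN
    (hG : ¬ (PowerSeries.X : PowerSeries F) ^ N ∣ PowerSeries.mk s) :
    ∃ h : MvPolynomial (Fin 2) F, h ≠ 0 ∧ h.totalDegree = expComplexityN s N ∧
      (PowerSeries.X : PowerSeries F) ^ N ∣
        MvPolynomial.aeval ![(PowerSeries.X : PowerSeries F), PowerSeries.mk s] h := by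
  have hs : ¬ ∀ i < N, s i = 0 := fun hs =>
    hG (PowerSeries.X_pow_dvd_iff.2 fun m hm => by simpa using hs m hm)
  rw [expComplexityN, if_neg hs]
  exact Nat.sInf_mem (s := {d | ∃ h : MvPolynomial (Fin 2) F, h ≠ 0 ∧ h.totalDegree = d ∧
    (PowerSeries.X : PowerSeries F) ^ N ∣
      MvPolynomial.aeval ![(PowerSeries.X : PowerSeries F), PowerSeries.mk s] h})
    ⟨N, MvPolynomial.X 0 ^ N, pow_ne_zero _ (MvPolynomial.X_ne_zero 0),
      MvPolynomial.totalDegree_X_pow _ _, by simp⟩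

end LinearRecurrence

open LinearRecurrence

theorem expComplexityN_lower_bound_aperiodic_general {F : Type*} [Field F]
    (s : ℕ → F) (N : ℕ)
    (hG : ¬ (PowerSeries.X : PowerSeries F) ^ N ∣ PowerSeries.mk s)
    (L t : ℕ) (htL : t ≤ L)
    (c : ℕ → F) (hcL : c L = 1) (hct : c t ≠ 0) (hct' : ∀ ℓ < t, c ℓ = 0)
    (hrec : ∀ i, i + L < N → ∑ ℓ ∈ Finset.range (L + 1), c ℓ * s (i + ℓ) = 0)
    (hmin : ∀ L' < L, ¬ ∃ c' : Fin L' → F, ∀ i, i + L' < N →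
      s (i + L') + ∑ ℓ : Fin L', c' ℓ * s (i + ℓ.1) = 0) :
    ((L - t) * (L + 1 - min 2 t) < N → L - t + 1 ≤ expComplexityN s N) ∧
    (N ≤ (L - t) * (L + 1 - min 2 t) → N ⌈/⌉ (L + 1 - min 2 t) ≤ expComplexityN s N) := by
  obtain ⟨h, hh, hdeg, hdvd⟩ := exists_totalDegree_eq_expComplexityN hG
  have key := le_totalDegree_or_le_totalDegree_mul hG htL hcL hct hct' hrec hmin hh hdvd
  rw [hdeg] at key
  have hm : 0 < L + 1 - min 2 t := by omega
  refine ⟨fun hlt => key.elim id fun hN => ?_, fun hle => ?_⟩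
  · exact Nat.lt_of_mul_lt_mul_right (hlt.trans_le hN)
  · rw [ceilDiv_le_iff_le_mul hm, mul_comm]
    rcases key with hE | hE
    · exact hle.trans (Nat.mul_le_mul_right _ (by omega))
    · exact hE

theorem expComplexityN_lower_bound_aperiodic {F : Type*} [Field F] [Fintype F]
    (s : ℕ → F) (N : ℕ) (hN : 2 ≤ N)
    (hG : ¬ (PowerSeries.X : PowerSeries F) ^ N ∣ PowerSeries.mk s)
    (L t : ℕ) (hL : linComplexityN s N = L) (htL : t ≤ L)
    (c : ℕ → F) (hcL : c L = 1) (hct : c t ≠ 0) (hct' : ∀ ℓ < t, c ℓ = 0)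
    (hrec : ∀ i, i + L < N → ∑ ℓ ∈ Finset.range (L + 1), c ℓ * s (i + ℓ) = 0)
    (hmin : ∀ L' < L, ¬ ∃ c' : Fin L' → F, ∀ i, i + L' < N →
      s (i + L') + ∑ ℓ : Fin L', c' ℓ * s (i + ℓ.1) = 0) :
    ((L - t) * (L + 1 - min 2 t) < N → L - t + 1 ≤ expComplexityN s N) ∧
    (N ≤ (L - t) * (L + 1 - min 2 t) → N ⌈/⌉ (L + 1 - min 2 t) ≤ expComplexityN s N) :=
  expComplexityN_lower_bound_aperiodic_general s N hG L t htL c hcL hct hct' hrec hmin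
end

section
/- Let S be a sequence over F_q with generating function G(x), and let N_1, N_2 ≥ 1 be such that G(x) ≢ 0 mod x^{min{N_1,N_2}}. Then E_{N_1+N_2}(S) ≤ E_{N_1}(S) + E_{N_2}(S). -/
theorem expComplexityN_subadditive {F : Type*} [Field F] [Fintype F]
    (s : ℕ → F) (N₁ N₂ : ℕ) (hN₁ : 1 ≤ N₁) (hN₂ : 1 ≤ N₂)
    (hG : ¬ (PowerSeries.X : PowerSeries F) ^ (min N₁ N₂) ∣ PowerSeries.mk s) :
    expComplexityN s (N₁ + N₂) ≤ expComplexityN s N₁ + expComplexityN s N₂ := by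
  classical
  obtain ⟨m, hm, hsm⟩ : ∃ m, m < min N₁ N₂ ∧ s m ≠ 0 := by
    by_contra h
    push_neg at h
    exact hG (PowerSeries.X_pow_dvd_iff.mpr fun n hn => by simpa using h n hn)
  have hne : ∀ N, m < N → ¬ ∀ i < N, s i = 0 := fun N hmN h => hsm (h m hmN)
  have hm1 : m < N₁ := lt_of_lt_of_le hm (min_le_left _ _)
  have hm2 : m < N₂ := lt_of_lt_of_le hm (min_le_right _ _)
  have hm12 : m < N₁ + N₂ := hm1.trans_le (Nat.le_add_right _ _)
  have hSne : ∀ N : ℕ, Set.Nonempty {d | ∃ h : MvPolynomial (Fin 2) F, h ≠ 0 ∧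
      h.totalDegree = d ∧ (PowerSeries.X : PowerSeries F) ^ N ∣
        MvPolynomial.aeval ![(PowerSeries.X : PowerSeries F), PowerSeries.mk s] h} := by
    intro N
    refine ⟨(MvPolynomial.X 0 ^ N : MvPolynomial (Fin 2) F).totalDegree,
      MvPolynomial.X 0 ^ N, pow_ne_zero _ (MvPolynomial.X_ne_zero 0), rfl, ?_⟩
    simp [map_pow]
  rw [expComplexityN, expComplexityN, expComplexityN, if_neg (hne _ hm12),
    if_neg (hne _ hm1), if_neg (hne _ hm2)]
  obtain ⟨h₁, h₁0, hd₁, hdvd₁⟩ := Nat.sInf_mem (hSne N₁)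
  obtain ⟨h₂, h₂0, hd₂, hdvd₂⟩ := Nat.sInf_mem (hSne N₂)
  calc sInf {d | ∃ h : MvPolynomial (Fin 2) F, h ≠ 0 ∧ h.totalDegree = d ∧
        (PowerSeries.X : PowerSeries F) ^ (N₁ + N₂) ∣
          MvPolynomial.aeval ![(PowerSeries.X : PowerSeries F), PowerSeries.mk s] h}
      ≤ (h₁ * h₂).totalDegree := by
        refine Nat.sInf_le ⟨h₁ * h₂, mul_ne_zero h₁0 h₂0, rfl, ?_⟩
        rw [map_mul, pow_add]
        exact mul_dvd_mul hdvd₁ hdvd₂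
    _ ≤ _ := by rw [← hd₁, ← hd₂]; exact MvPolynomial.totalDegree_mul _ _
end
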